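/- arXiv:1709.06023 — 9 statements merged into one kernel-verified Lean document; each statement's English description precedes it below -/
import Mathlib

section
/- Let A be a set with quaternary operations d_0,...,d_k : A^4 → A satisfying the Day equations: d_i(x,y,y,x)=x for all i; d_0(x,y,z,w)=x; d_i(x,x,w,w)=d_{i+1}(x,x,w,w) for i even; d_i(x,y,y,w)=d_{i+1}(x,y,y,w) for i odd; and d_k(x,y,z,w)=w. Let α and γ be equivalence relations on A preserved by every d_i (i.e., each d_i maps quadruples of related pairs to related pairs), and let R be a reflexive relation on A preserved by every d_i. Set Δ = R ∘ R^⌣ (composition of R with its converse). Then α ∩ (Δ ∘ (α∩γ) ∘ Δ) ⊆ (α∩Δ) ∘ (α∩γ) ∘ (α∩Δ) ∘ (α∩γ) ∘ ⋯ with k factors on the right-hand side (alternating, starting with α∩Δ). -/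
/-- Relational composition: `rcomp R S a c ↔ ∃ b, R a b ∧ S b c`. -/
def rcomp {A : Type*} (R S : A → A → Prop) : A → A → Prop := fun a c => ∃ b, R a b ∧ S b c

/-- Converse of a relation. -/
def rconv {A : Type*} (R : A → A → Prop) : A → A → Prop := fun a b => R b a

/-- Intersection of relations. -/
def rinter {A : Type*} (R S : A → A → Prop) : A → A → Prop := fun a b => R a b ∧ S a b

/-- Inclusion of relations. -/
def rsub {A : Type*} (R S : A → A → Prop) : Prop := ∀ a b, R a b → S a b

/-- Alternating composition with `m` factors, starting with `R`:
`altn R S m = R ∘ S ∘ R ∘ ⋯` (`m` factors, `m-1` occurrences of `∘`). -/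
def altn {A : Type*} : (A → A → Prop) → (A → A → Prop) → ℕ → A → A → Prop
  | _, _, 0 => Eq
  | R, S, m + 1 => rcomp R (altn S R m)

/-- Composition `T i ∘ T (i+1) ∘ ⋯ ∘ T (i+m-1)` of `m` relations starting at index `i`. -/
def chainFrom {A : Type*} (T : ℕ → A → A → Prop) : ℕ → ℕ → A → A → Prop
  | _, 0 => Eq
  | i, m + 1 => rcomp (T i) (chainFrom T (i + 1) m)

/-- The nested expression `A_ℓ`: `nest α β γ 1 = α∩(β ∘ (α∩γ) ∘ β)`, and
`nest α β γ (ℓ+1) = α∩(β ∘ (α ∩ nest α γ β ℓ) ∘ β)` (the inner one swaps `β` and `γ`). -/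
def nest {A : Type*} : (A → A → Prop) → (A → A → Prop) → (A → A → Prop) → ℕ → A → A → Prop
  | _, _, γ, 0 => γ
  | α, β, γ, ℓ + 1 => rinter α (rcomp β (rcomp (rinter α (nest α γ β ℓ)) β))

/-- A ternary operation preserves a relation. -/
def pres3 {A : Type*} (f : A → A → A → A) (R : A → A → Prop) : Prop :=
  ∀ a₁ a₂ a₃ b₁ b₂ b₃, R a₁ b₁ → R a₂ b₂ → R a₃ b₃ → R (f a₁ a₂ a₃) (f b₁ b₂ b₃)

/-- A quaternary operation preserves a relation. -/
def pres4 {A : Type*} (f : A → A → A → A → A) (R : A → A → Prop) : Prop :=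
  ∀ a₁ a₂ a₃ a₄ b₁ b₂ b₃ b₄, R a₁ b₁ → R a₂ b₂ → R a₃ b₃ → R a₄ b₄ →
    R (f a₁ a₂ a₃ a₄) (f b₁ b₂ b₃ b₄)

/-- Day equations for quaternary operations `d 0, …, d k`. -/
def DayEqs {A : Type*} (k : ℕ) (d : ℕ → A → A → A → A → A) : Prop :=
  (∀ i, i ≤ k → ∀ x y, d i x y y x = x) ∧
  (∀ x y z w, d 0 x y z w = x) ∧
  (∀ i, i < k → i % 2 = 0 → ∀ x w, d i x x w w = d (i + 1) x x w w) ∧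
  (∀ i, i < k → i % 2 = 1 → ∀ x y w, d i x y y w = d (i + 1) x y y w) ∧
  (∀ x y z w, d k x y z w = w)

/-- Jónsson equations for ternary operations `j 0, …, j (n+1)` witnessing `n+1`-distributivity. -/
def JonssonEqs {A : Type*} (n : ℕ) (j : ℕ → A → A → A → A) : Prop :=
  (∀ i, i ≤ n + 1 → ∀ x y, j i x y x = x) ∧
  (∀ x y z, j 0 x y z = x) ∧
  (∀ i, i ≤ n → i % 2 = 1 → ∀ x z, j i x z z = j (i + 1) x z z) ∧
  (∀ i, i ≤ n → i % 2 = 0 → ∀ x z, j i x x z = j (i + 1) x x z) ∧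
  (∀ x y z, j (n + 1) x y z = z)

/-- Gumm equations for ternary operations `p, j 1, …, j (n+1)`. -/
def GummEqs {A : Type*} (n : ℕ) (p : A → A → A → A) (j : ℕ → A → A → A → A) : Prop :=
  (∀ i, 1 ≤ i → i ≤ n + 1 → ∀ x y, j i x y x = x) ∧
  (∀ x z, p x z z = x) ∧
  (∀ x z, p x x z = j 1 x x z) ∧
  (∀ i, 1 ≤ i → i ≤ n → i % 2 = 1 → ∀ x z, j i x z z = j (i + 1) x z z) ∧
  (∀ i, 1 ≤ i → i ≤ n → i % 2 = 0 → ∀ x z, j i x x z = j (i + 1) x x z) ∧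
  (∀ x y z, j (n + 1) x y z = z)

/-- Defective Gumm equations: all Gumm equations except that `j n (x,y,x) = x` is not assumed. -/
def DefGummEqs {A : Type*} (n : ℕ) (p : A → A → A → A) (j : ℕ → A → A → A → A) : Prop :=
  (∀ i, 1 ≤ i → i ≤ n + 1 → i ≠ n → ∀ x y, j i x y x = x) ∧
  (∀ x z, p x z z = x) ∧
  (∀ x z, p x x z = j 1 x x z) ∧
  (∀ i, 1 ≤ i → i ≤ n → i % 2 = 1 → ∀ x z, j i x z z = j (i + 1) x z z) ∧
  (∀ i, 1 ≤ i → i ≤ n → i % 2 = 0 → ∀ x z, j i x x z = j (i + 1) x x z) ∧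
  (∀ x y z, j (n + 1) x y z = z)

/-- Day operations, congruences `α, γ`, a reflexive preserved relation `R`,
`Δ = R ∘ R^⌣`. Then `α ∩ (Δ ∘ (α∩γ) ∘ Δ) ⊆ (α∩Δ) ∘ (α∩γ) ∘ ⋯` with `k` factors. -/
theorem stmt0 {A : Type*} (k : ℕ) (d : ℕ → A → A → A → A → A) (hday : DayEqs k d)
    (α γ R : A → A → Prop) (hα : Equivalence α) (hγ : Equivalence γ)
    (hRrefl : ∀ a, R a a)
    (hdα : ∀ i, i ≤ k → pres4 (d i) α)
    (hdγ : ∀ i, i ≤ k → pres4 (d i) γ)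
    (hdR : ∀ i, i ≤ k → pres4 (d i) R) :
    rsub
      (rinter α (rcomp (rcomp R (rconv R)) (rcomp (rinter α γ) (rcomp R (rconv R)))))
      (altn (rinter α (rcomp R (rconv R))) (rinter α γ) k) := by

  rintro a b ⟨hab, x, ⟨p, hap, hxp⟩, y, ⟨hxy_a, hxy_g⟩, q, hyq, hbq⟩
  obtain ⟨h1, h0, heven, hodd, hk⟩ := hday
  set z : ℕ → A := fun i => d i a x y b with hz
  -- α-step: z i is α-related to a for i ≤ k
  have hza : ∀ i, i ≤ k → α (z i) a := by
    intro i hi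
    have := hdα i hi a x y b a x x a (hα.refl a) (hα.refl x)
      (hα.symm (hα.trans hxy_a (hα.refl y))) (hα.symm hab)
    simpa [h1 i hi a x] using this
  -- Δ-step for even i
  have hΔ : ∀ i, i < k → i % 2 = 0 → rcomp R (rconv R) (z i) (z (i+1)) := by
    intro i hi hpar
    refine ⟨d i p p q q, ?_, ?_⟩
    · exact hdR i hi.le a x y b p p q q hap hxp hyq hbq
    · show R (z (i+1)) (d i p p q q)
      rw [heven i hi hpar p q]
      exact hdR (i+1) hi a x y b p p q q hap hxp hyq hbq
  -- γ-step for odd i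
  have hγstep : ∀ i, i < k → i % 2 = 1 → γ (z i) (z (i+1)) := by
    intro i hi hpar
    have e1 : γ (z i) (d i a x x b) :=
      hdγ i hi.le a x y b a x x b (hγ.refl a) (hγ.refl x) (hγ.symm hxy_g) (hγ.refl b)
    have e2 : γ (d (i+1) a x x b) (z (i+1)) :=
      hdγ (i+1) hi a x x b a x y b (hγ.refl a) (hγ.refl x) hxy_g (hγ.refl b)
    rw [hodd i hi hpar a x b] at e1
    exact hγ.trans e1 e2
  have hstep_a : ∀ i, i < k → α (z i) (z (i+1)) := fun i hi =>
    hα.trans (hza i hi.le) (hα.symm (hza (i+1) hi))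
  -- main induction
  have main : ∀ m i, i + m = k →
      (i % 2 = 0 → altn (rinter α (rcomp R (rconv R))) (rinter α γ) m (z i) b) ∧
      (i % 2 = 1 → altn (rinter α γ) (rinter α (rcomp R (rconv R))) m (z i) b) := by
    intro m
    induction m with
    | zero =>
      intro i hi
      subst hi
      have : z i = b := by simpa using hk a x y b
      constructor <;> intro _ <;> simp [altn, this]
    | succ m ih =>
      intro i hi
      have hik : i < k := by omega
      have hi1 : (i + 1) + m = k := by omega
      constructor
      · intro hpar
        refine ⟨z (i+1), ⟨hstep_a i hik, hΔ i hik hpar⟩, ?_⟩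
        exact (ih (i+1) hi1).2 (by omega)
      · intro hpar
        refine ⟨z (i+1), ⟨hstep_a i hik, hγstep i hik hpar⟩, ?_⟩
        exact (ih (i+1) hi1).1 (by omega)
  have h0' : z 0 = a := h0 a x y b
  have := (main k 0 (by omega)).1 rfl
  rwa [h0'] at this
end

section
/- Let A be a set and let α, β, γ be equivalence relations on A. If m is odd, then α ∩ (β ∘ (α∩γ) ∘ β ∘ ⋯ ∘ (α∩γ)) with m+1 alternating factors equals (α ∩ (β ∘ (α∩γ) ∘ ⋯ ∘ β)) ∘ (α∩γ), where the inner expression has m alternating factors beginning and ending with β. Consequently, for m odd and k even, the inclusion α ∩ (β ∘_m (α∩γ)) ⊆ (α∩β) ∘_k (α∩γ) holds for all congruences on all algebras of a variety if and only if the corresponding inclusion with m+1 factors on the left holds. -/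
lemma altn_snoc {A : Type*} : ∀ (n : ℕ) (R S : A → A → Prop) (a b : A),
    altn R S (n + 1) a b ↔ rcomp (altn R S n) (if Even n then R else S) a b := by
  intro n
  induction n with
  | zero =>
    intro R S a b
    simp [altn, rcomp]
  | succ n ih =>
    intro R S a b
    constructor
    · rintro ⟨c, hac, hcb⟩
      rw [ih] at hcb
      obtain ⟨d, hcd, hdb⟩ := hcb
      refine ⟨d, ⟨c, hac, hcd⟩, ?_⟩
      rcases Nat.even_or_odd n with h | h
      · simp [h, Nat.even_add_one, Nat.not_even_iff_odd,
          Nat.not_odd_iff_even.mpr h] at hdb ⊢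
        exact hdb
      · simp [Nat.not_even_iff_odd.mpr h, Nat.even_add_one,
          Nat.not_odd_iff_even, Nat.not_even_iff_odd.mpr h] at hdb ⊢
        exact hdb
    · rintro ⟨d, ⟨c, hac, hcd⟩, hdb⟩
      refine ⟨c, hac, ?_⟩
      rw [ih]
      refine ⟨d, hcd, ?_⟩
      rcases Nat.even_or_odd n with h | h
      · simp [h, Nat.even_add_one, Nat.not_even_iff_odd,
          Nat.not_odd_iff_even.mpr h] at hdb ⊢
        exact hdb
      · simp [Nat.not_even_iff_odd.mpr h, Nat.even_add_one,
          Nat.not_odd_iff_even, Nat.not_even_iff_odd.mpr h] at hdb ⊢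
        exact hdb

/-- for equivalence relations `α, β, γ` and `m` odd,
`α ∩ (β ∘_{m+1} (α∩γ)) = (α ∩ (β ∘_m (α∩γ))) ∘ (α∩γ)`. -/
theorem stmt1 {A : Type*} (α β γ : A → A → Prop)
    (hα : Equivalence α) (hβ : Equivalence β) (hγ : Equivalence γ)
    (m : ℕ) (hm : Odd m) :
    ∀ a b, rinter α (altn β (rinter α γ) (m + 1)) a b ↔
      rcomp (rinter α (altn β (rinter α γ) m)) (rinter α γ) a b := by
  intro a b
  have hme : ¬ Even m := Nat.not_even_iff_odd.mpr hm
  constructor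
  · rintro ⟨hab, h⟩
    rw [altn_snoc, if_neg hme] at h
    obtain ⟨c, hac, hcb⟩ := h
    have hαab : α a c := hα.trans hab (hα.symm hcb.1)
    exact ⟨c, ⟨hαab, hac⟩, hcb⟩
  · rintro ⟨c, ⟨hαac, hac⟩, hcb⟩
    refine ⟨hα.trans hαac hcb.1, ?_⟩
    rw [altn_snoc, if_neg hme]
    exact ⟨c, hac, hcb⟩
end

section
/- Suppose an algebra A has Day operations d_0,...,d_3 (i.e., 4 Day terms witnessing 3-modularity). Then for every m ≥ 3 and all congruences α, β, γ of A, the inclusion α ∩ (β ∘_m (α∩γ)) ⊆ (α∩β) ∘_m (α∩γ) holds; that is, 3-modularity implies (m,m)-modularity for every m ≥ 3. -/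
namespace Stmt4Aux

variable {A : Type*}

/-- Parity-dependent selector: the `n`-th factor (0-indexed) of `altn R S _`. -/
def tpar (R S : A → A → Prop) (n : ℕ) : A → A → Prop := if n % 2 = 0 then R else S

theorem tpar_even {R S : A → A → Prop} {n : ℕ} (h : n % 2 = 0) : tpar R S n = R := by
  simp [tpar, h]

theorem tpar_odd {R S : A → A → Prop} {n : ℕ} (h : n % 2 = 1) : tpar R S n = S := by
  simp [tpar, h]

theorem tpar_succ (R S : A → A → Prop) (n : ℕ) : tpar R S (n+1) = tpar S R n := by
  rcases Nat.mod_two_eq_zero_or_one n with h | h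
  · rw [tpar_odd (by omega), tpar_even h]
  · rw [tpar_even (by omega), tpar_odd h]

theorem tpar_refl {R S : A → A → Prop} (hR : ∀ x, R x x) (hS : ∀ x, S x x) (n : ℕ) (x : A) :
    tpar R S n x x := by
  unfold tpar; split
  · exact hR x
  · exact hS x

theorem altn_refl : ∀ (n : ℕ) (R S : A → A → Prop), (∀ x, R x x) → (∀ x, S x x) →
    ∀ x, altn R S n x x := by
  intro n
  induction n with
  | zero => intro R S _ _ x; rfl
  | succ n ih => intro R S hR hS x; exact ⟨x, hR x, ih S R hS hR x⟩

theorem altn_concat : ∀ (p : ℕ) (R S : A → A → Prop) (x w y : A) (q : ℕ),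
    altn R S p x w → altn (tpar R S p) (tpar R S (p+1)) q w y → altn R S (p+q) x y := by
  intro p
  induction p with
  | zero =>
    intro R S x w y q h1 h2
    have hxw : x = w := h1
    subst hxw
    rw [Nat.zero_add]
    rwa [tpar_even rfl, tpar_odd rfl] at h2
  | succ p ih =>
    intro R S x w y q h1 h2
    obtain ⟨z, hxz, hz⟩ := h1
    rw [tpar_succ, tpar_succ] at h2
    have hres := ih S R z w y q hz h2
    have e : p + 1 + q = (p + q) + 1 := by omega
    rw [e]
    exact ⟨z, hxz, hres⟩

theorem altn_split : ∀ (p : ℕ) (R S : A → A → Prop) (x y : A) (q : ℕ),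
    altn R S (p+q) x y → ∃ w, altn R S p x w ∧ altn (tpar R S p) (tpar R S (p+1)) q w y := by
  intro p
  induction p with
  | zero =>
    intro R S x y q h
    rw [Nat.zero_add] at h
    exact ⟨x, rfl, by rwa [tpar_even rfl, tpar_odd rfl]⟩
  | succ p ih =>
    intro R S x y q h
    have e : p + 1 + q = (p + q) + 1 := by omega
    rw [e] at h
    obtain ⟨z, hxz, hz⟩ := h
    obtain ⟨w, hw1, hw2⟩ := ih S R z y q hz
    refine ⟨w, ⟨z, hxz, hw1⟩, ?_⟩
    rwa [tpar_succ, tpar_succ]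

theorem altn_snoc {R S : A → A → Prop} {p : ℕ} {x w y : A}
    (h1 : altn R S p x w) (h2 : tpar R S p w y) : altn R S (p+1) x y :=
  altn_concat p R S x w y 1 h1 ⟨y, h2, rfl⟩

theorem altn_mono {R S : A → A → Prop} (hR : ∀ x, R x x) (hS : ∀ x, S x x) {p : ℕ} {x y : A}
    (h : altn R S p x y) : altn R S (p+1) x y :=
  altn_snoc h (tpar_refl hR hS p y)

theorem altn_le {R S : A → A → Prop} (hR : ∀ x, R x x) (hS : ∀ x, S x x) {p q : ℕ}
    (hpq : p ≤ q) {x y : A} (h : altn R S p x y) : altn R S q x y := by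
  induction q, hpq using Nat.le_induction with
  | base => exact h
  | succ n hn ih => exact altn_mono hR hS ih

theorem altn_rev : ∀ (n : ℕ) (R S : A → A → Prop), (∀ x y, R x y → R y x) →
    (∀ x y, S x y → S y x) → ∀ x y,
    altn R S n x y → altn (tpar S R n) (tpar R S n) n y x := by
  intro n
  induction n with
  | zero => intro R S _ _ x y h; exact h.symm
  | succ n ih =>
    intro R S hR hS x y h
    obtain ⟨z, hxz, hz⟩ := h
    have ih' := ih S R hS hR z y hz
    have last : tpar (tpar R S n) (tpar S R n) n z x := by
      rcases Nat.mod_two_eq_zero_or_one n with h0 | h0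
      · rw [tpar_even h0, tpar_even h0]; exact hR _ _ hxz
      · rw [tpar_odd h0, tpar_odd h0]; exact hR _ _ hxz
    have res := altn_snoc ih' last
    rw [tpar_succ, tpar_succ]
    exact res

theorem altn_rev_odd {R S : A → A → Prop} (hR : ∀ x y, R x y → R y x)
    (hS : ∀ x y, S x y → S y x) {n : ℕ} (hn : n % 2 = 1) {x y : A}
    (h : altn R S n x y) : altn R S n y x := by
  have := altn_rev n R S hR hS x y h
  rwa [tpar_odd hn, tpar_odd hn] at this

theorem altn_rev_even {R S : A → A → Prop} (hR : ∀ x y, R x y → R y x)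
    (hS : ∀ x y, S x y → S y x) {n : ℕ} (hn : n % 2 = 0) {x y : A}
    (h : altn R S n x y) : altn S R n y x := by
  have := altn_rev n R S hR hS x y h
  rwa [tpar_even hn, tpar_even hn] at this

theorem pres4_eq (f : A → A → A → A → A) : pres4 f Eq := by
  intro a1 a2 a3 a4 b1 b2 b3 b4 h1 h2 h3 h4
  rw [h1, h2, h3, h4]

theorem altn_pres {f : A → A → A → A → A} : ∀ (n : ℕ) (R S : A → A → Prop),
    pres4 f R → pres4 f S → pres4 f (altn R S n) := by
  intro n
  induction n with
  | zero => intro R S _ _; exact pres4_eq f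
  | succ n ih =>
    intro R S hR hS a1 a2 a3 a4 b1 b2 b3 b4 h1 h2 h3 h4
    obtain ⟨z1, hz1, h1'⟩ := h1
    obtain ⟨z2, hz2, h2'⟩ := h2
    obtain ⟨z3, hz3, h3'⟩ := h3
    obtain ⟨z4, hz4, h4'⟩ := h4
    exact ⟨f z1 z2 z3 z4, hR _ _ _ _ _ _ _ _ hz1 hz2 hz3 hz4,
      ih S R hS hR _ _ _ _ _ _ _ _ h1' h2' h3' h4'⟩

end Stmt4Aux

open Stmt4Aux in
theorem stmt4_main {A : Type*} (d : ℕ → A → A → A → A → A) (hday : DayEqs 3 d)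
    (α β γ : A → A → Prop)
    (hα : Equivalence α) (hβ : Equivalence β) (hγ : Equivalence γ)
    (hdα : ∀ i, i ≤ 3 → pres4 (d i) α)
    (hdβ : ∀ i, i ≤ 3 → pres4 (d i) β)
    (hdγ : ∀ i, i ≤ 3 → pres4 (d i) γ) :
    ∀ m a b, α a b → altn β (rinter α γ) m a b →
      altn (rinter α β) (rinter α γ) m a b := by
  set dlt := rinter α γ with hdltdef
  set eta := rinter α β with hetadef
  have hδsym : ∀ x y, dlt x y → dlt y x := fun _ _ h => ⟨hα.symm h.1, hγ.symm h.2⟩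
  have hδrefl : ∀ x, dlt x x := fun x => ⟨hα.refl x, hγ.refl x⟩
  have hδtrans : ∀ x y z, dlt x y → dlt y z → dlt x z :=
    fun _ _ _ h h' => ⟨hα.trans h.1 h'.1, hγ.trans h.2 h'.2⟩
  have hδα : ∀ x y, dlt x y → α x y := fun _ _ h => h.1
  have hβsym : ∀ x y, β x y → β y x := fun _ _ h => hβ.symm h
  have hβrefl : ∀ x, β x x := fun x => hβ.refl x
  have hηtrans : ∀ x y z, eta x y → eta y z → eta x z :=
    fun _ _ _ h h' => ⟨hα.trans h.1 h'.1, hβ.trans h.2 h'.2⟩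
  have e1 : ∀ x y, d 1 x y y x = x := hday.1 1 (by norm_num)
  have e2 : ∀ x y, d 2 x y y x = x := hday.1 2 (by norm_num)
  have e10 : ∀ x w, d 1 x x w w = x := by
    intro x w
    have h := hday.2.2.1 0 (by norm_num) (by norm_num) x w
    rw [← h]; exact hday.2.1 x x w w
  have e23 : ∀ x w, d 2 x x w w = w := by
    intro x w
    have h := hday.2.2.1 2 (by norm_num) (by norm_num) x w
    rw [h]; exact hday.2.2.2.2 x x w w
  have e12 : ∀ x y w, d 1 x y y w = d 2 x y y w :=
    fun x y w => hday.2.2.2.1 1 (by norm_num) (by norm_num) x y w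
  have pδ : ∀ i, i ≤ 3 → pres4 (d i) dlt := fun i hi a1 a2 a3 a4 b1 b2 b3 b4 h1 h2 h3 h4 =>
    ⟨hdα i hi _ _ _ _ _ _ _ _ h1.1 h2.1 h3.1 h4.1,
     hdγ i hi _ _ _ _ _ _ _ _ h1.2 h2.2 h3.2 h4.2⟩
  intro m
  induction m using Nat.strong_induction_on with
  | _ m ih =>
  intro a b hab hch
  rcases m with _ | m1
  · exact hch
  rcases m1 with _ | m2
  · -- m = 1
    obtain ⟨w, hbw, hw⟩ := hch
    have hw' : w = b := hw
    subst hw'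
    exact ⟨w, ⟨hab, hbw⟩, rfl⟩
  rcases Nat.mod_two_eq_zero_or_one (m2+2) with hpar | hpar
  · -- even case: peel the final δ-link
    obtain ⟨w, hw1, hw2⟩ := altn_split (m2+1) β dlt a b 1 hch
    rw [tpar_odd (by omega : (m2+1) % 2 = 1)] at hw2
    obtain ⟨c, hwc, hc⟩ := hw2
    have hc' : c = b := hc
    subst hc'
    have hwb : α w c := hδα _ _ hwc
    have haw : α a w := hα.trans hab (hα.symm hwb)
    have ihw := ih (m2+1) (by omega) a w haw hw1
    exact altn_snoc ihw (by rw [tpar_odd (by omega : (m2+1) % 2 = 1)]; exact hwc)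
  · -- odd case
    by_cases hm3 : m2 = 1
    · -- m = 3, base case
      subst hm3
      obtain ⟨x1, hb1, x2, hd2, x3, hb3, h3⟩ := hch
      have h3' : x3 = b := h3
      subst h3'
      have hβy1 : β (d 1 a x1 x2 x3) x1 := by
        have := hdβ 1 (by norm_num) a x1 x2 x3 x1 x1 x3 x3 hb1 (hβ.refl x1) hb3 (hβ.refl x3)
        rwa [e10] at this
      have hβay1 : β a (d 1 a x1 x2 x3) := hβ.trans hb1 (hβ.symm hβy1)
      have hαy1 : α (d 1 a x1 x2 x3) a := by
        have := hdα 1 (by norm_num) a x1 x2 x3 a x1 x1 a (hα.refl a) (hα.refl x1)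
          (hα.symm (hδα _ _ hd2)) (hα.symm hab)
        rwa [e1] at this
      have hδy12 : dlt (d 1 a x1 x2 x3) (d 2 a x1 x2 x3) := by
        have ha : dlt (d 1 a x1 x2 x3) (d 1 a x1 x1 x3) :=
          pδ 1 (by norm_num) a x1 x2 x3 a x1 x1 x3 (hδrefl a) (hδrefl x1) (hδsym _ _ hd2) (hδrefl x3)
        have hb' : dlt (d 2 a x1 x1 x3) (d 2 a x1 x2 x3) :=
          pδ 2 (by norm_num) a x1 x1 x3 a x1 x2 x3 (hδrefl a) (hδrefl x1) hd2 (hδrefl x3)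
        rw [e12 a x1 x3] at ha
        exact hδtrans _ _ _ ha hb'
      have hβy2 : β (d 2 a x1 x2 x3) x3 := by
        have := hdβ 2 (by norm_num) a x1 x2 x3 x1 x1 x3 x3 hb1 (hβ.refl x1) hb3 (hβ.refl x3)
        rwa [e23] at this
      have hαy2 : α (d 2 a x1 x2 x3) a := by
        have := hdα 2 (by norm_num) a x1 x2 x3 a x1 x1 a (hα.refl a) (hα.refl x1)
          (hα.symm (hδα _ _ hd2)) (hα.symm hab)
        rwa [e2] at this
      exact ⟨d 1 a x1 x2 x3, ⟨hα.symm hαy1, hβay1⟩, d 2 a x1 x2 x3, hδy12, x3,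
        ⟨hα.trans hαy2 hab, hβy2⟩, rfl⟩
    · -- m = m2 + 2 ≥ 5, odd : midpoint construction
      have hm2o : m2 % 2 = 1 := by omega
      have hm25 : 3 ≤ m2 := by omega
      obtain ⟨s', u, hu, hmeq⟩ : ∃ s' u, (u = 0 ∨ u = 2) ∧ m2 + 2 = 4*s' + 5 + u := by
        have h1 : (m2+2) % 4 = 1 ∨ (m2+2) % 4 = 3 := by omega
        rcases h1 with h | h
        · exact ⟨(m2+2-5)/4, 0, Or.inl rfl, by omega⟩
        · exact ⟨(m2+2-7)/4, 2, Or.inr rfl, by omega⟩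
      have hueven : u % 2 = 0 := by omega
      have hule : u ≤ 2*s'+3 := by omega
      -- split the chain:  m = (2s'+1) + ((2s'+3+u) + 1)
      rw [(by omega : m2 + 2 = (2*s'+1) + ((2*s'+3+u) + 1))] at hch
      obtain ⟨g1, hpre1, hrest⟩ := altn_split (2*s'+1) β dlt a b ((2*s'+3+u)+1) hch
      rw [tpar_odd (by omega : (2*s'+1) % 2 = 1), tpar_even (by omega : (2*s'+1+1) % 2 = 0)]
        at hrest
      obtain ⟨g2, hδg, hrest2⟩ := hrest
      obtain ⟨xh, hmid, htail⟩ := altn_split (2*s'+3) β dlt g2 b u hrest2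
      rw [tpar_odd (by omega : (2*s'+3) % 2 = 1), tpar_even (by omega : (2*s'+3+1) % 2 = 0)]
        at htail
      -- reversed chains
      have hrev1 : altn β dlt (2*s'+3) g1 a :=
        altn_le hβrefl hδrefl (by omega)
          (altn_rev_odd hβsym hδsym (by omega : (2*s'+1) % 2 = 1) hpre1)
      have hag2 : altn β dlt (2*s'+2) a g2 :=
        altn_snoc hpre1 (by rw [tpar_odd (by omega : (2*s'+1) % 2 = 1)]; exact hδg)
      have hrev2 : altn β dlt (2*s'+3) g2 a := by
        have h := altn_rev_even hβsym hδsym (by omega : (2*s'+2) % 2 = 0) hag2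
        exact ⟨g2, hβ.refl g2, h⟩
      have hrev3 : altn β dlt (2*s'+3) b xh := by
        have h := altn_rev_even hδsym hβsym hueven htail
        exact altn_le hβrefl hδrefl hule h
      -- preservation of the big chain relation
      have hΘ1 : pres4 (d 1) (altn β dlt (2*s'+3)) :=
        altn_pres (2*s'+3) β dlt (hdβ 1 (by norm_num)) (pδ 1 (by norm_num))
      have hΘ2 : pres4 (d 2) (altn β dlt (2*s'+3)) :=
        altn_pres (2*s'+3) β dlt (hdβ 2 (by norm_num)) (pδ 2 (by norm_num))
      have hΘrefl : ∀ x, altn β dlt (2*s'+3) x x := altn_refl (2*s'+3) β dlt hβrefl hδrefl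
      -- midpoint elements
      have hP1 : altn β dlt (2*s'+3) (d 1 a g1 g2 b) a := by
        have := hΘ1 a g1 g2 b a a xh xh (hΘrefl a) hrev1 hmid hrev3
        rwa [e10] at this
      have hP2 : altn β dlt (2*s'+3) (d 2 a g1 g2 b) xh := by
        have := hΘ2 a g1 g2 b a a xh xh (hΘrefl a) hrev1 hmid hrev3
        rwa [e23] at this
      have hΩa : altn β dlt (2*s'+3) (d 1 (d 2 a g1 g2 b) g2 g2 (d 1 a g1 g2 b)) a := by
        rw [e12]
        have := hΘ2 (d 2 a g1 g2 b) g2 g2 (d 1 a g1 g2 b) xh xh a a hP2 hmid hrev2 hP1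
        rwa [e23] at this
      have hΩh : altn β dlt (2*s'+3) (d 1 (d 2 a g1 g2 b) g2 g2 (d 1 a g1 g2 b)) xh := by
        have := hΘ1 (d 2 a g1 g2 b) g2 g2 (d 1 a g1 g2 b) xh xh a a hP2 hmid hrev2 hP1
        rwa [e10] at this
      -- α-facts
      have hαP1 : α (d 1 a g1 g2 b) a := by
        have := hdα 1 (by norm_num) a g1 g2 b a g1 g1 a (hα.refl a) (hα.refl g1)
          (hα.symm (hδα _ _ hδg)) (hα.symm hab)
        rwa [e1] at this
      have hαP2 : α (d 2 a g1 g2 b) a := by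
        have := hdα 2 (by norm_num) a g1 g2 b a g1 g1 a (hα.refl a) (hα.refl g1)
          (hα.symm (hδα _ _ hδg)) (hα.symm hab)
        rwa [e2] at this
      have hαΩ : α (d 1 (d 2 a g1 g2 b) g2 g2 (d 1 a g1 g2 b)) a := by
        have hP21 : α (d 2 a g1 g2 b) (d 1 a g1 g2 b) := hα.trans hαP2 (hα.symm hαP1)
        have := hdα 1 (by norm_num) (d 2 a g1 g2 b) g2 g2 (d 1 a g1 g2 b)
          (d 1 a g1 g2 b) g2 g2 (d 1 a g1 g2 b) hP21 (hα.refl g2) (hα.refl g2)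
          (hα.refl (d 1 a g1 g2 b))
        rw [e1] at this
        exact hα.trans this hαP1
      -- recurse on the two halves
      have hA : altn eta dlt (2*s'+3) a (d 1 (d 2 a g1 g2 b) g2 g2 (d 1 a g1 g2 b)) :=
        ih (2*s'+3) (by omega) a _ (hα.symm hαΩ)
          (altn_rev_odd hβsym hδsym (by omega : (2*s'+3) % 2 = 1) hΩa)
      have hsec : altn (tpar β dlt (2*s'+3)) (tpar β dlt (2*s'+3+1)) u xh b := by
        rw [tpar_odd (by omega : (2*s'+3) % 2 = 1), tpar_even (by omega : (2*s'+3+1) % 2 = 0)]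
        exact htail
      have hchainΩb : altn β dlt (2*s'+3+u) (d 1 (d 2 a g1 g2 b) g2 g2 (d 1 a g1 g2 b)) b :=
        altn_concat (2*s'+3) β dlt _ xh b u hΩh hsec
      have hB : altn eta dlt (2*s'+3+u) (d 1 (d 2 a g1 g2 b) g2 g2 (d 1 a g1 g2 b)) b :=
        ih (2*s'+3+u) (by omega) _ b (hα.trans hαΩ hab) hchainΩb
      -- merge the two refined chains at the midpoint
      obtain ⟨w, hw1, hw2⟩ := altn_split (2*s'+2) eta dlt a _ 1 hA
      rw [tpar_even (by omega : (2*s'+2) % 2 = 0)] at hw2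
      obtain ⟨v0, hηwΩ, hv0⟩ := hw2
      have hv0' : v0 = d 1 (d 2 a g1 g2 b) g2 g2 (d 1 a g1 g2 b) := hv0
      subst hv0'
      rw [(by omega : 2*s'+3+u = (2*s'+2+u)+1)] at hB
      obtain ⟨v, hηΩv, hv⟩ := hB
      have hηwv : eta w v := hηtrans _ _ _ hηwΩ hηΩv
      have hfinal := altn_concat (2*s'+2) eta dlt a w b ((2*s'+2+u)+1) hw1
        (by rw [tpar_even (by omega : (2*s'+2) % 2 = 0),
              tpar_odd (by omega : (2*s'+2+1) % 2 = 1)]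
            exact ⟨v, hηwv, hv⟩)
      rw [(by omega : (2*s'+2) + ((2*s'+2+u)+1) = m2+2)] at hfinal
      exact hfinal

/-- an algebra with Day operations `d 0, …, d 3` (3-modularity) is
`(m,m)`-modular for every `m ≥ 3`. -/
theorem stmt4 {A : Type*} (d : ℕ → A → A → A → A → A) (hday : DayEqs 3 d)
    (α β γ : A → A → Prop)
    (hα : Equivalence α) (hβ : Equivalence β) (hγ : Equivalence γ)
    (hdα : ∀ i, i ≤ 3 → pres4 (d i) α)
    (hdβ : ∀ i, i ≤ 3 → pres4 (d i) β)
    (hdγ : ∀ i, i ≤ 3 → pres4 (d i) γ)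
    (m : ℕ) (hm : 3 ≤ m) :
    rsub (rinter α (altn β (rinter α γ) m))
      (altn (rinter α β) (rinter α γ) m) := by
  intro a b hab
  exact stmt4_main d hday α β γ hα hβ hγ hdα hdβ hdγ m a b hab.1 hab.2
end

section
/- Let A be a set with ternary operations p, j_1, ..., j_{n+1} : A^3 → A satisfying the Gumm equations: j_i(x,y,x) = x for all i; p(x,z,z) = x; p(x,x,z) = j_1(x,x,z); j_i(x,z,z) = j_{i+1}(x,z,z) for i odd, i ≤ n; j_i(x,x,z) = j_{i+1}(x,x,z) for i even, i ≤ n; j_{n+1}(x,y,z) = z. Let α be an equivalence relation preserved by p and all j_i, and let R, S be reflexive relations preserved by p and all j_i. Then α ∩ (R ∘ S) ⊆ (α ∩ Q) ∘ (((α∩R) ∘ (α∩S)) ∘_n ((α∩S^⌣) ∘ (α∩R^⌣))), where Q is any reflexive relation preserved by p and all j_i that contains R^⌣ ∪ S. -/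
/-- Gumm operations; `α` an equivalence preserved by them, `R, S` reflexive
preserved relations, `Q` a reflexive preserved relation containing `R^⌣ ∪ S`.  Then
`α ∩ (R ∘ S) ⊆ (α∩Q) ∘ (((α∩R)∘(α∩S)) ∘_n ((α∩S^⌣)∘(α∩R^⌣)))`. -/
theorem stmt7 {A : Type*} (n : ℕ) (p : A → A → A → A) (j : ℕ → A → A → A → A)
    (hg : GummEqs n p j)
    (α R S Q : A → A → Prop) (hα : Equivalence α)
    (hRrefl : ∀ a, R a a) (hSrefl : ∀ a, S a a) (hQrefl : ∀ a, Q a a)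
    (hpα : pres3 p α) (hjα : ∀ i, 1 ≤ i → i ≤ n + 1 → pres3 (j i) α)
    (hpR : pres3 p R) (hjR : ∀ i, 1 ≤ i → i ≤ n + 1 → pres3 (j i) R)
    (hpS : pres3 p S) (hjS : ∀ i, 1 ≤ i → i ≤ n + 1 → pres3 (j i) S)
    (hpQ : pres3 p Q) (hjQ : ∀ i, 1 ≤ i → i ≤ n + 1 → pres3 (j i) Q)
    (hQR : ∀ a b, rconv R a b → Q a b) (hQS : ∀ a b, S a b → Q a b) :
    rsub (rinter α (rcomp R S))
      (rcomp (rinter α Q)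
        (altn (rcomp (rinter α R) (rinter α S))
          (rcomp (rinter α (rconv S)) (rinter α (rconv R))) n)) := by
  obtain ⟨hjid, hp1, hp2, hodd, heven, hlast⟩ := hg
  intro a c h
  obtain ⟨hac, b, hab, hbc⟩ := h
  have hca : α c a := hα.symm hac
  have αja : ∀ i y, 1 ≤ i → i ≤ n + 1 → α (j i a y c) a := by
    intro i y h1 h2
    have := hjα i h1 h2 a y c a y a (hα.refl a) (hα.refl y) hca
    rwa [hjid i h1 h2 a y] at this
  set T := rcomp (rinter α R) (rinter α S) with hT
  set U := rcomp (rinter α (rconv S)) (rinter α (rconv R)) with hU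
  have key : ∀ m i, 1 ≤ i → i + m = n + 1 →
      (i % 2 = 1 → altn T U m (j i a a c) c) ∧
      (i % 2 = 0 → altn U T m (j i a c c) c) := by
    intro m
    induction m with
    | zero =>
      intro i h1 h2
      have hi : i = n + 1 := by omega
      subst hi
      exact ⟨fun _ => hlast a a c, fun _ => hlast a c c⟩
    | succ m ih =>
      intro i h1 h2
      have hile : i ≤ n := by omega
      have hile1 : i ≤ n + 1 := by omega
      have hi1le : i + 1 ≤ n + 1 := by omega
      have hRn : R (j i a a c) (j i a b c) :=
        hjR i h1 hile1 a a c a b c (hRrefl a) hab (hRrefl c)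
      have hSn : S (j i a b c) (j i a c c) :=
        hjS i h1 hile1 a b c a c c (hSrefl a) hbc (hSrefl c)
      have hα1 : α (j i a a c) (j i a b c) :=
        hα.trans (αja i a h1 hile1) (hα.symm (αja i b h1 hile1))
      have hα2 : α (j i a b c) (j i a c c) :=
        hα.trans (αja i b h1 hile1) (hα.symm (αja i c h1 hile1))
      constructor
      · intro hp
        have hnext : j i a c c = j (i + 1) a c c := hodd i h1 hile hp a c
        refine ⟨j i a c c, ⟨j i a b c, ⟨hα1, hRn⟩, ⟨hα2, hSn⟩⟩, ?_⟩
        rw [hnext]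
        exact (ih (i + 1) (by omega) (by omega)).2 (by omega)
      · intro hp
        have hnext : j i a a c = j (i + 1) a a c := heven i h1 hile hp a c
        refine ⟨j i a a c, ⟨j i a b c, ⟨hα.symm hα2, hSn⟩, ⟨hα.symm hα1, hRn⟩⟩, ?_⟩
        rw [hnext]
        exact (ih (i + 1) (by omega) (by omega)).1 (by omega)
  have hchain := (key n 1 le_rfl (by omega)).1 rfl
  refine ⟨j 1 a a c, ⟨hα.symm (αja 1 a le_rfl (by omega)), ?_⟩, hchain⟩
  have hq : Q (p a b b) (p a a c) :=
    hpQ a b b a a c (hQrefl a) (hQR b a hab) (hQS b c hbc)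
  rwa [hp1 a b, hp2 a c] at hq
end

section
/- Let A be a set with ternary operations p, j_1, ..., j_{n+1} satisfying the Gumm equations (as in Theorem of Gumm). Let α be an equivalence relation preserved by all these operations, let T_1, ..., T_m be reflexive relations preserved by all these operations, and let R, S be binary relations with T_1 ∘ T_2 ∘ ⋯ ∘ T_m ⊆ R ∘ S. Let Q be a reflexive relation preserved by the operations containing R^⌣ ∪ S. Then α ∩ (T_1 ∘ ⋯ ∘ T_m) ⊆ (α ∩ Q) ∘ (((α∩T_1) ∘ ⋯ ∘ (α∩T_m)) ∘_n ((α∩T_m^⌣) ∘ ⋯ ∘ (α∩T_1^⌣))), where the right alternates n blocks: forward chain, backward chain, forward chain, .... -/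
/-- Gumm operations; `α` an equivalence preserved by them, reflexive preserved
relations `T 1, …, T m` with `T 1 ∘ ⋯ ∘ T m ⊆ R ∘ S`, and `Q ⊇ R^⌣ ∪ S` a reflexive preserved
relation.  Then `α ∩ (T 1 ∘ ⋯ ∘ T m) ⊆ (α∩Q) ∘ (F ∘_n F^⌣)` where
`F = (α∩T 1) ∘ ⋯ ∘ (α∩T m)` (the backward chain `(α∩T m^⌣)∘⋯∘(α∩T 1^⌣)` is `F^⌣`). -/
theorem stmt8 {A : Type*} (n m : ℕ) (p : A → A → A → A) (j : ℕ → A → A → A → A)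
    (hg : GummEqs n p j)
    (α : A → A → Prop) (T : ℕ → A → A → Prop) (R S Q : A → A → Prop)
    (hα : Equivalence α)
    (hTrefl : ∀ i, 1 ≤ i → i ≤ m → ∀ a, T i a a)
    (hpα : pres3 p α) (hjα : ∀ i, 1 ≤ i → i ≤ n + 1 → pres3 (j i) α)
    (hpT : ∀ l, 1 ≤ l → l ≤ m → pres3 p (T l))
    (hjT : ∀ i, 1 ≤ i → i ≤ n + 1 → ∀ l, 1 ≤ l → l ≤ m → pres3 (j i) (T l))
    (hRS : rsub (chainFrom T 1 m) (rcomp R S))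
    (hQrefl : ∀ a, Q a a)
    (hpQ : pres3 p Q) (hjQ : ∀ i, 1 ≤ i → i ≤ n + 1 → pres3 (j i) Q)
    (hQR : ∀ a b, rconv R a b → Q a b) (hQS : ∀ a b, S a b → Q a b) :
    rsub (rinter α (chainFrom T 1 m))
      (rcomp (rinter α Q)
        (altn (chainFrom (fun i => rinter α (T i)) 1 m)
          (rconv (chainFrom (fun i => rinter α (T i)) 1 m)) n)) := by
  obtain ⟨hjid, hp1, hp2, hodd, heven, hlast⟩ := hg
  intro a b hab
  obtain ⟨haαb, hchain⟩ := hab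
  obtain ⟨u, hRu, hSb⟩ := hRS a b hchain
  -- every j i a w b is α-related to a
  have hαj : ∀ i, 1 ≤ i → i ≤ n + 1 → ∀ w, α (j i a w b) a := by
    intro i h1 h2 w
    have h := hjα i h1 h2 a w b a w a (hα.refl a) (hα.refl w) (hα.symm haαb)
    rwa [hjid i h1 h2 a w] at h
  -- chain lemma
  have chainF : ∀ i, 1 ≤ i → i ≤ n + 1 → ∀ m' s, 1 ≤ s → s + m' ≤ m + 1 →
      ∀ x y, chainFrom T s m' x y →
        chainFrom (fun l => rinter α (T l)) s m' (j i a x b) (j i a y b) := by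
    intro i h1 h2 m'
    induction m' with
    | zero =>
      intro s _ _ x y h
      simp only [chainFrom] at h ⊢
      rw [h]
    | succ m'' ih =>
      intro s hs1 hs2 x y h
      obtain ⟨z, hxz, hrest⟩ := h
      refine ⟨j i a z b, ⟨?_, ?_⟩, ih (s + 1) (by omega) (by omega) z y hrest⟩
      · exact hα.trans (hαj i h1 h2 x) (hα.symm (hαj i h1 h2 z))
      · exact hjT i h1 h2 s hs1 (by omega) a x b a z b
          (hTrefl s hs1 (by omega) a) hxz (hTrefl s hs1 (by omega) b)
  set F : A → A → Prop := chainFrom (fun l => rinter α (T l)) 1 m with hFdef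
  have hF : ∀ i, 1 ≤ i → i ≤ n + 1 → F (j i a a b) (j i a b b) := by
    intro i h1 h2
    exact chainF i h1 h2 m 1 le_rfl (by omega) a b hchain
  -- alternating chain
  have halt : ∀ k i, 1 ≤ i → i + k = n + 1 →
      (i % 2 = 1 → altn F (rconv F) k (j i a a b) b) ∧
      (i % 2 = 0 → altn (rconv F) F k (j i a b b) b) := by
    intro k
    induction k with
    | zero =>
      intro i h1 h2
      have hi : i = n + 1 := by omega
      subst hi
      constructor
      · intro _; show j (n + 1) a a b = b; exact hlast a a b
      · intro _; show j (n + 1) a b b = b; exact hlast a b b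
    | succ k ih =>
      intro i h1 h2
      constructor
      · intro hoi
        refine ⟨j i a b b, hF i h1 (by omega), ?_⟩
        have he : j i a b b = j (i + 1) a b b := hodd i h1 (by omega) hoi a b
        rw [he]
        exact (ih (i + 1) (by omega) (by omega)).2 (by omega)
      · intro hei
        refine ⟨j i a a b, hF i h1 (by omega), ?_⟩
        have he : j i a a b = j (i + 1) a a b := heven i h1 (by omega) hei a b
        rw [he]
        exact (ih (i + 1) (by omega) (by omega)).1 (by omega)
  refine ⟨j 1 a a b, ⟨hα.symm (hαj 1 le_rfl (by omega) a), ?_⟩, ?_⟩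
  · have h1 : Q (p a u u) (p a a b) :=
      hpQ a u u a a b (hQrefl a) (hQR u a hRu) (hQS u b hSb)
    rwa [hp1 a u, hp2 a b] at h1
  · exact (halt n 1 le_rfl (by omega)).1 (by norm_num)
end

section
/- Let A be a set with ternary operations p, j_1, ..., j_{n+1} satisfying the defective Gumm equations (all Gumm equations except that j_n(x,y,x) = x is not assumed), with n even. Let α be an equivalence relation and R, S reflexive relations, all preserved by the operations, and let Q ⊇ R^⌣ ∪ S and Q' ⊇ R ∪ S^⌣ be reflexive relations preserved by the operations. Then α ∩ (R ∘ S) ⊆ (α ∩ Q) ∘ (((α∩R)∘(α∩S)) ∘_{n−1} ((α∩S^⌣)∘(α∩R^⌣))) ∘ (α ∩ Q'). -/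
/-- defective Gumm operations (`n` even); `α` an equivalence, `R, S` reflexive,
all preserved; `Q ⊇ R^⌣ ∪ S` and `Q' ⊇ R ∪ S^⌣` reflexive preserved relations.  Then
`α ∩ (R ∘ S) ⊆ (α∩Q) ∘ (((α∩R)∘(α∩S)) ∘_{n−1} ((α∩S^⌣)∘(α∩R^⌣))) ∘ (α∩Q')`. -/
theorem stmt9 {A : Type*} (n : ℕ) (hn : Even n)
    (p : A → A → A → A) (j : ℕ → A → A → A → A) (hg : DefGummEqs n p j)
    (α R S Q Q' : A → A → Prop) (hα : Equivalence α)
    (hRrefl : ∀ a, R a a) (hSrefl : ∀ a, S a a)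
    (hQrefl : ∀ a, Q a a) (hQ'refl : ∀ a, Q' a a)
    (hpα : pres3 p α) (hjα : ∀ i, 1 ≤ i → i ≤ n + 1 → pres3 (j i) α)
    (hpR : pres3 p R) (hjR : ∀ i, 1 ≤ i → i ≤ n + 1 → pres3 (j i) R)
    (hpS : pres3 p S) (hjS : ∀ i, 1 ≤ i → i ≤ n + 1 → pres3 (j i) S)
    (hpQ : pres3 p Q) (hjQ : ∀ i, 1 ≤ i → i ≤ n + 1 → pres3 (j i) Q)
    (hpQ' : pres3 p Q') (hjQ' : ∀ i, 1 ≤ i → i ≤ n + 1 → pres3 (j i) Q')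
    (hQR : ∀ a b, rconv R a b → Q a b) (hQS : ∀ a b, S a b → Q a b)
    (hQ'R : ∀ a b, R a b → Q' a b) (hQ'S : ∀ a b, rconv S a b → Q' a b) :
    rsub (rinter α (rcomp R S))
      (rcomp (rinter α Q)
        (rcomp
          (altn (rcomp (rinter α R) (rinter α S))
            (rcomp (rinter α (rconv S)) (rinter α (rconv R))) (n - 1))
          (rinter α Q'))) := by
  intro a c hac0
  obtain ⟨hac, b, hab, hbc⟩ := hac0
  obtain ⟨h1, h2, h3, h4, h5, h6⟩ := hg
  have hnmod : n % 2 = 0 := Nat.even_iff.mp hn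
  -- alpha facts
  have F1 : ∀ i, 1 ≤ i → i ≤ n + 1 → i ≠ n → ∀ y, α (j i a y c) c := by
    intro i hi1 hi2 hne y
    have h := hjα i hi1 hi2 a y c c y c hac (hα.refl y) (hα.refl c)
    rwa [h1 i hi1 hi2 hne c y] at h
  -- Q step
  have Qstep : Q a (j 1 a a c) := by
    have h := hpQ a b b a a c (hQrefl a) (hQR b a hab) (hQS b c hbc)
    rwa [h2 a b, h3 a c] at h
  by_cases hn0 : n = 0
  · subst hn0
    have hx : j 1 a a c = c := h6 a a c
    refine ⟨c, ⟨hac, by rwa [hx] at Qstep⟩, c, rfl, hα.refl c, hQ'refl c⟩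
  · have hn2 : 2 ≤ n := by omega
    -- key induction
    have key : ∀ m i, 1 ≤ i → i + m = n →
        ((i % 2 = 1 → altn (rcomp (rinter α R) (rinter α S))
            (rcomp (rinter α (rconv S)) (rinter α (rconv R))) m
            (j i a a c) (j n a c c)) ∧
         (i % 2 = 0 → altn (rcomp (rinter α (rconv S)) (rinter α (rconv R)))
            (rcomp (rinter α R) (rinter α S)) m
            (j i a c c) (j n a c c))) := by
      intro m
      induction m with
      | zero =>
        intro i hi1 hin
        have : i = n := by omega
        subst this
        exact ⟨fun hodd => by omega, fun _ => rfl⟩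
      | succ m ih =>
        intro i hi1 hin
        have hilt : i < n := by omega
        have hine : i ≠ n := by omega
        have hi2 : i ≤ n + 1 := by omega
        have αaac : α (j i a a c) c := F1 i hi1 hi2 hine a
        have αabc : α (j i a b c) c := F1 i hi1 hi2 hine b
        have αacc : α (j i a c c) c := F1 i hi1 hi2 hine c
        have hRstep : R (j i a a c) (j i a b c) :=
          hjR i hi1 hi2 a a c a b c (hRrefl a) hab (hRrefl c)
        have hSstep : S (j i a b c) (j i a c c) :=
          hjS i hi1 hi2 a b c a c c (hSrefl a) hbc (hSrefl c)
        constructor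
        · intro hodd
          have heq : j i a c c = j (i + 1) a c c := h4 i hi1 (by omega) hodd a c
          refine ⟨j (i + 1) a c c, ⟨j i a b c,
            ⟨hα.trans αaac (hα.symm αabc), hRstep⟩,
            ⟨hα.trans αabc (hα.symm (heq ▸ αacc)), heq ▸ hSstep⟩⟩, ?_⟩
          exact (ih (i + 1) (by omega) (by omega)).2 (by omega)
        · intro heven
          have heq : j i a a c = j (i + 1) a a c := h5 i hi1 (by omega) heven a c
          refine ⟨j (i + 1) a a c, ⟨j i a b c,
            ⟨hα.trans αacc (hα.symm αabc), hSstep⟩,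
            ⟨hα.trans αabc (hα.symm (heq ▸ αaac)), heq ▸ hRstep⟩⟩, ?_⟩
          exact (ih (i + 1) (by omega) (by omega)).1 (by omega)
    have F2 : α (j n a c c) c := by
      have h := hjα n (by omega) (by omega) a c c c c c hac (hα.refl c) (hα.refl c)
      rwa [h5 n (by omega) (le_refl n) hnmod c c, h6 c c c] at h
    have Q'step : Q' (j n a c c) c := by
      have h := hjQ' n (by omega) (by omega) a c c b b c (hQ'R a b hab)
        (hQ'S c b hbc) (hQ'refl c)
      rwa [h5 n (by omega) (le_refl n) hnmod b c, h6 b b c] at h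
    have α1 : α (j 1 a a c) c := F1 1 (le_refl 1) (by omega) (by omega) a
    refine ⟨j 1 a a c, ⟨hα.trans hac (hα.symm α1), Qstep⟩,
      j n a c c, ?_, F2, Q'step⟩
    exact (key (n - 1) 1 (le_refl 1) (by omega)).1 rfl
end

section
/- Suppose an algebra A has Gumm operations p, j_1, ..., j_{n+1}. Then for all congruences α, β, γ of A and all q ≥ 1, the inclusion α ∩ (β ∘ γ ∘ β ∘ ⋯ ∘ β) with 2^q + 1 alternating factors is contained in (α ∩ (γ ∘ β)) ∘ ((α∩γ) ∘_k (α∩β)) where k = (2^{q+1} − 2)n. -/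
private lemma altn_chain {A : Type*} :
    ∀ (m : ℕ) (R S : A → A → Prop) (a e : A), altn R S m a e →
      ∃ c : ℕ → A, c 0 = a ∧ c m = e ∧
        ∀ t, t < m → (if t % 2 = 0 then R else S) (c t) (c (t+1)) := by
  intro m
  induction m with
  | zero =>
    intro R S a e h
    refine ⟨fun _ => a, rfl, ?_, ?_⟩
    · exact h
    · intro t ht; exact absurd ht (by omega)
  | succ m ih =>
    intro R S a e h
    obtain ⟨b, hab, h2⟩ := h
    obtain ⟨c, hc0, hcm, hed⟩ := ih S R b e h2
    refine ⟨fun t => Nat.casesOn t a c, rfl, hcm, ?_⟩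
    intro t ht
    cases t with
    | zero =>
      rw [if_pos (by norm_num : 0 % 2 = 0)]
      show R a (c 0)
      rw [hc0]; exact hab
    | succ s =>
      show (if (s+1) % 2 = 0 then R else S) (c s) (c (s+1))
      have h3 := hed s (by omega)
      rcases Nat.mod_two_eq_zero_or_one s with hp | hp
      · rw [if_neg (by omega)]
        rw [if_pos hp] at h3; exact h3
      · rw [if_pos (by omega)]
        rw [if_neg (by omega)] at h3; exact h3

private lemma altn_build {A : Type*} :
    ∀ (m : ℕ) (R S : A → A → Prop) (c : ℕ → A),
      (∀ t, t < m → (if t % 2 = 0 then R else S) (c t) (c (t+1))) →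
      altn R S m (c 0) (c m) := by
  intro m
  induction m with
  | zero => intro R S c _; rfl
  | succ m ih =>
    intro R S c hed
    refine ⟨c 1, ?_, ?_⟩
    · have := hed 0 (by omega)
      rwa [if_pos (by norm_num : 0 % 2 = 0)] at this
    · refine ih S R (fun t => c (t+1)) ?_
      intro t ht
      have h3 := hed (t+1) (by omega)
      rcases Nat.mod_two_eq_zero_or_one t with hp | hp
      · rw [if_pos hp]
        rw [if_neg (by omega)] at h3; exact h3
      · rw [if_neg (by omega)]
        rw [if_pos (by omega)] at h3; exact h3

private lemma altn_build' {A : Type*} (m : ℕ) (R S : A → A → Prop) (c : ℕ → A) (x y : A)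
    (hx : c 0 = x) (hy : c m = y)
    (h : ∀ t, t < m → (if t % 2 = 0 then R else S) (c t) (c (t+1))) :
    altn R S m x y := by
  have h2 := altn_build m R S c h
  rwa [hx, hy] at h2

private lemma altn_trans_even {A : Type*} {X Y : A → A → Prop} :
    ∀ (k : ℕ), k % 2 = 0 → ∀ {l : ℕ} {a b c : A},
      altn X Y k a b → altn X Y l b c → altn X Y (k + l) a c := by
  intro k
  induction k using Nat.strong_induction_on with
  | _ k ih =>
    match k with
    | 0 =>
      intro _ l a b c h1 h2
      have h1' : a = b := h1
      have hl : 0 + l = l := by omega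
      rw [hl, h1']; exact h2
    | 1 => intro h; omega
    | (k+2) =>
      intro hk l a b c h1 h2
      obtain ⟨w, hw, w2, hw2, hrest⟩ := h1
      have h3 := ih k (by omega) (by omega) hrest h2
      have he : k + 2 + l = (k + l) + 2 := by omega
      rw [he]
      exact ⟨w, hw, w2, hw2, h3⟩
private lemma grid_walk {A : Type*} (n : ℕ) (j : ℕ → A → A → A → A)
    (α β γ : A → A → Prop) (hα : Equivalence α) (hβ : Equivalence β) (hγ : Equivalence γ)
    (hjα : ∀ i, 1 ≤ i → i ≤ n + 1 → pres3 (j i) α)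
    (hjβ : ∀ i, 1 ≤ i → i ≤ n + 1 → pres3 (j i) β)
    (hjγ : ∀ i, 1 ≤ i → i ≤ n + 1 → pres3 (j i) γ)
    (hid : ∀ i, 1 ≤ i → i ≤ n + 1 → ∀ x y, j i x y x = x)
    (hodd : ∀ i, 1 ≤ i → i ≤ n → i % 2 = 1 → ∀ x z, j i x z z = j (i + 1) x z z)
    (heven : ∀ i, 1 ≤ i → i ≤ n → i % 2 = 0 → ∀ x z, j i x x z = j (i + 1) x x z)
    (hlast : ∀ x y z, j (n + 1) x y z = z)
    (m : ℕ) (hm2 : m % 2 = 1) (hm3 : 3 ≤ m)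
    (a e : A) (c : ℕ → A) (hc0 : c 0 = a) (hcm : c m = e)
    (hc : ∀ t, t < m → (if t % 2 = 0 then β else γ) (c t) (c (t+1)))
    (hae : α a e) :
    altn (rinter α γ) (rinter α β) (n * (m - 1)) (j 1 a (c 1) e) e := by
  have hua : ∀ i x, 1 ≤ i → i ≤ n + 1 → α (j i a x e) a := by
    intro i x h1 h2
    have h3 := hjα i h1 h2 a x e a x a (hα.refl a) (hα.refl x) (hα.symm hae)
    rwa [hid i h1 h2 a x] at h3
  have huu : ∀ i i' x y, 1 ≤ i → i ≤ n + 1 → 1 ≤ i' → i' ≤ n + 1 →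
      α (j i a x e) (j i' a y e) :=
    fun i i' x y h1 h2 h3 h4 => hα.trans (hua i x h1 h2) (hα.symm (hua i' y h3 h4))
  -- single steps along the chain inside level i
  have hstepγ : ∀ i t, 1 ≤ i → i ≤ n + 1 → t < m → t % 2 = 1 →
      rinter α γ (j i a (c t) e) (j i a (c (t+1)) e) := by
    intro i t h1 h2 ht hp
    have h3 := hc t ht
    rw [if_neg (by omega)] at h3
    exact ⟨huu i i _ _ h1 h2 h1 h2,
      hjγ i h1 h2 a (c t) e a (c (t+1)) e (hγ.refl a) h3 (hγ.refl e)⟩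
  have hstepβ : ∀ i t, 1 ≤ i → i ≤ n + 1 → t < m → t % 2 = 0 →
      rinter α β (j i a (c t) e) (j i a (c (t+1)) e) := by
    intro i t h1 h2 ht hp
    have h3 := hc t ht
    rw [if_pos hp] at h3
    exact ⟨huu i i _ _ h1 h2 h1 h2,
      hjβ i h1 h2 a (c t) e a (c (t+1)) e (hβ.refl a) h3 (hβ.refl e)⟩
  have hsymγ : ∀ x y, rinter α γ x y → rinter α γ y x :=
    fun x y h => ⟨hα.symm h.1, hγ.symm h.2⟩
  have hsymβ : ∀ x y, rinter α β x y → rinter α β y x :=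
    fun x y h => ⟨hα.symm h.1, hβ.symm h.2⟩
  -- crossings
  have crossO : ∀ i, 1 ≤ i → i ≤ n → i % 2 = 1 →
      rinter α β (j i a (c (m-1)) e) (j (i+1) a (c (m-1)) e) := by
    intro i h1 h2 hp
    have hcm1 : β (c (m-1)) (c m) := by
      have h3 := hc (m-1) (by omega)
      have he : m - 1 + 1 = m := by omega
      rw [if_pos (by omega : (m-1) % 2 = 0), he] at h3
      exact h3
    have h3 : β (j i a (c (m-1)) e) (j i a e e) := by
      have h4 := hjβ i h1 (by omega) a (c (m-1)) e a (c m) e (hβ.refl a) hcm1 (hβ.refl e)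
      rwa [hcm] at h4
    have h4 : β (j (i+1) a e e) (j (i+1) a (c (m-1)) e) := by
      have h5 := hjβ (i+1) (by omega) (by omega) a (c m) e a (c (m-1)) e (hβ.refl a)
        (hβ.symm hcm1) (hβ.refl e)
      rwa [hcm] at h5
    refine ⟨huu i (i+1) _ _ h1 (by omega) (by omega) (by omega), ?_⟩
    rw [hodd i h1 h2 hp a e] at h3
    exact hβ.trans h3 h4
  have crossE : ∀ i, 1 ≤ i → i ≤ n → i % 2 = 0 →
      rinter α β (j i a (c 1) e) (j (i+1) a (c 1) e) := by
    intro i h1 h2 hp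
    have hc01 : β (c 0) (c 1) := by
      have h3 := hc 0 (by omega)
      rwa [if_pos (by norm_num : 0 % 2 = 0)] at h3
    have h3 : β (j i a (c 1) e) (j i a a e) := by
      have h4 := hjβ i h1 (by omega) a (c 1) e a (c 0) e (hβ.refl a) (hβ.symm hc01) (hβ.refl e)
      rwa [hc0] at h4
    have h4 : β (j (i+1) a a e) (j (i+1) a (c 1) e) := by
      have h5 := hjβ (i+1) (by omega) (by omega) a (c 0) e a (c 1) e (hβ.refl a) hc01 (hβ.refl e)
      rwa [hc0] at h5
    refine ⟨huu i (i+1) _ _ h1 (by omega) (by omega) (by omega), ?_⟩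
    rw [heven i h1 h2 hp a e] at h3
    exact hβ.trans h3 h4
  -- segments
  have segO : ∀ i, 1 ≤ i → i ≤ n → i % 2 = 1 →
      altn (rinter α γ) (rinter α β) (m-1) (j i a (c 1) e) (j (i+1) a (c (m-1)) e) := by
    intro i h1 h2 hp
    refine altn_build' (m-1) _ _
      (fun s => if s < m - 1 then j i a (c (s+1)) e else j (i+1) a (c (m-1)) e) _ _ ?_ ?_ ?_
    · have h0 : 0 < m - 1 := by omega
      simp [h0]
    · simp
    · intro s hs
      rcases Nat.lt_or_ge s (m-2) with hs2 | hs2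
      · have hlt1 : s < m - 1 := by omega
        have hlt2 : s + 1 < m - 1 := by omega
        simp only [if_pos hlt1, if_pos hlt2]
        rcases Nat.mod_two_eq_zero_or_one s with hq | hq
        · rw [if_pos hq]
          exact hstepγ i (s+1) h1 (by omega) (by omega) (by omega)
        · rw [if_neg (by omega)]
          exact hstepβ i (s+1) h1 (by omega) (by omega) (by omega)
      · have hseq : s = m - 2 := by omega
        have hlt1 : s < m - 1 := by omega
        have hnext : ¬ (s + 1 < m - 1) := by omega
        simp only [if_pos hlt1, if_neg hnext]
        rw [if_neg (by omega : ¬ s % 2 = 0)]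
        have he : s + 1 = m - 1 := by omega
        rw [he]
        exact crossO i h1 h2 hp
  have segE : ∀ i, 1 ≤ i → i ≤ n → i % 2 = 0 →
      altn (rinter α γ) (rinter α β) (m-1) (j i a (c (m-1)) e) (j (i+1) a (c 1) e) := by
    intro i h1 h2 hp
    refine altn_build' (m-1) _ _
      (fun s => if s < m - 1 then j i a (c (m-1-s)) e else j (i+1) a (c 1) e) _ _ ?_ ?_ ?_
    · have h0 : 0 < m - 1 := by omega
      simp [h0]
    · simp
    · intro s hs
      rcases Nat.lt_or_ge s (m-2) with hs2 | hs2
      · have hlt1 : s < m - 1 := by omega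
        have hlt2 : s + 1 < m - 1 := by omega
        simp only [if_pos hlt1, if_pos hlt2]
        have he : m - 1 - (s+1) = m - 2 - s := by omega
        rw [he]
        have he2 : m - 2 - s + 1 = m - 1 - s := by omega
        rcases Nat.mod_two_eq_zero_or_one s with hq | hq
        · rw [if_pos hq]
          have h3 := hstepγ i (m-2-s) h1 (by omega) (by omega) (by omega)
          rw [he2] at h3
          exact hsymγ _ _ h3
        · rw [if_neg (by omega)]
          have h3 := hstepβ i (m-2-s) h1 (by omega) (by omega) (by omega)
          rw [he2] at h3
          exact hsymβ _ _ h3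
      · have hseq : s = m - 2 := by omega
        have hlt1 : s < m - 1 := by omega
        have hnext : ¬ (s + 1 < m - 1) := by omega
        simp only [if_pos hlt1, if_neg hnext]
        rw [if_neg (by omega : ¬ s % 2 = 0)]
        have he : m - 1 - s = 1 := by omega
        rw [he]
        exact crossE i h1 h2 hp
  -- assemble
  have H : ∀ k, k ≤ n →
      altn (rinter α γ) (rinter α β) (k * (m-1))
        (if (n+1-k) % 2 = 1 then j (n+1-k) a (c 1) e else j (n+1-k) a (c (m-1)) e) e := by
    intro k
    induction k with
    | zero =>
      intro _
      have h1 : n + 1 - 0 = n + 1 := by omega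
      rw [h1]
      have h2 : 0 * (m-1) = 0 := by ring
      rw [h2]
      show (if (n+1) % 2 = 1 then j (n+1) a (c 1) e else j (n+1) a (c (m-1)) e) = e
      split
      · exact hlast a (c 1) e
      · exact hlast a (c (m-1)) e
    | succ k ihk =>
      intro hk1
      have ihk' := ihk (by omega)
      have e1 : n + 1 - k = (n - k) + 1 := by omega
      have e2 : n + 1 - (k+1) = n - k := by omega
      rw [e1] at ihk'
      rw [e2]
      have hi1 : 1 ≤ n - k := by omega
      have hi2 : n - k ≤ n := by omega
      have hlen : (k+1) * (m-1) = (m-1) + k * (m-1) := by ring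
      rw [hlen]
      rcases Nat.mod_two_eq_zero_or_one (n-k) with hp | hp
      · rw [if_neg (by omega)]
        refine altn_trans_even (m-1) (by omega) (segE (n-k) hi1 hi2 hp) ?_
        rwa [if_pos (by omega : (n-k+1) % 2 = 1)] at ihk'
      · rw [if_pos hp]
        refine altn_trans_even (m-1) (by omega) (segO (n-k) hi1 hi2 hp) ?_
        rwa [if_neg (by omega : ¬ (n-k+1) % 2 = 1)] at ihk'
  have h := H n (le_refl n)
  rw [show n + 1 - n = 1 by omega] at h
  rwa [if_pos (by norm_num : 1 % 2 = 1)] at h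

/-- an algebra with Gumm operations satisfies, for congruences `α, β, γ` and
`q ≥ 1`: `α ∩ (β ∘ γ ∘ ⋯ ∘ β)` with `2^q + 1` factors is contained in
`(α ∩ (γ ∘ β)) ∘ ((α∩γ) ∘_k (α∩β))` with `k = (2^{q+1} − 2)n`. -/
theorem stmt10 {A : Type*} (n : ℕ) (p : A → A → A → A) (j : ℕ → A → A → A → A)
    (hg : GummEqs n p j)
    (α β γ : A → A → Prop)
    (hα : Equivalence α) (hβ : Equivalence β) (hγ : Equivalence γ)
    (hpα : pres3 p α) (hjα : ∀ i, 1 ≤ i → i ≤ n + 1 → pres3 (j i) α)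
    (hpβ : pres3 p β) (hjβ : ∀ i, 1 ≤ i → i ≤ n + 1 → pres3 (j i) β)
    (hpγ : pres3 p γ) (hjγ : ∀ i, 1 ≤ i → i ≤ n + 1 → pres3 (j i) γ)
    (q : ℕ) (hq : 1 ≤ q) :
    rsub (rinter α (altn β γ (2 ^ q + 1)))
      (rcomp (rinter α (rcomp γ β))
        (altn (rinter α γ) (rinter α β) ((2 ^ (q + 1) - 2) * n))) := by
  obtain ⟨hid, hpzz, hpj1, hoddE, hevenE, hlast⟩ := hg
  suffices H : ∀ q, 1 ≤ q → ∀ a e, α a e → altn β γ (2 ^ q + 1) a e →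
      rcomp (rinter α (rcomp γ β))
        (altn (rinter α γ) (rinter α β) ((2 ^ (q + 1) - 2) * n)) a e by
    intro a e hre
    exact H q hq a e hre.1 hre.2
  intro q hq
  induction q, hq using Nat.le_induction with
  | base =>
    intro a e hae hch
    rw [show (2:ℕ)^1 + 1 = 3 by norm_num] at hch
    obtain ⟨c, hc0, hcm, hc⟩ := altn_chain 3 β γ a e hch
    have hc01 : β (c 0) (c 1) := by
      have h3 := hc 0 (by omega); rwa [if_pos (by norm_num : 0 % 2 = 0)] at h3
    have hc12 : γ (c 1) (c 2) := by
      have h3 := hc 1 (by omega); rwa [if_neg (by norm_num : ¬ 1 % 2 = 0)] at h3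
    have hc23 : β (c 2) (c 3) := by
      have h3 := hc 2 (by omega); rwa [if_pos (by norm_num : 2 % 2 = 0)] at h3
    -- the first hop: a (γ∘β) j 1 a (c 1) e, with α
    have hj1n : (1:ℕ) ≤ n + 1 := by omega
    have hαd : α a (j 1 a (c 1) e) := by
      have h3 := hjα 1 (le_refl 1) hj1n a (c 1) e a (c 1) a (hα.refl a) (hα.refl _)
        (hα.symm hae)
      rw [hid 1 (le_refl 1) hj1n a (c 1)] at h3
      exact hα.symm h3
    have hγax : γ a (p a (c 1) (c 2)) := by
      have h3 := hpγ a (c 2) (c 2) a (c 1) (c 2) (hγ.refl a) (hγ.symm hc12) (hγ.refl (c 2))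
      rwa [hpzz a (c 2)] at h3
    have hβxd : β (p a (c 1) (c 2)) (j 1 a (c 1) e) := by
      have h3 : β (p a (c 1) (c 2)) (p a a e) := by
        have h4 := hpβ a (c 1) (c 2) a (c 0) (c 3) (hβ.refl a) (hβ.symm hc01) hc23
        rwa [hc0, hcm] at h4
      rw [hpj1 a e] at h3
      have h4 : β (j 1 a a e) (j 1 a (c 1) e) := by
        have h5 := hjβ 1 (le_refl 1) hj1n a a e a (c 1) e (hβ.refl a) ?_ (hβ.refl e)
        · exact h5
        · rw [← hc0]; exact hc01
      exact hβ.trans h3 h4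
    have hgrid := grid_walk n j α β γ hα hβ hγ hjα hjβ hjγ hid hoddE hevenE hlast
      3 (by norm_num) (by norm_num) a e c hc0 hcm hc hae
    refine ⟨j 1 a (c 1) e, ⟨hαd, p a (c 1) (c 2), hγax, hβxd⟩, ?_⟩
    have harr : (2^(1+1) - 2) * n = n * (3 - 1) := by norm_num [Nat.mul_comm]
    rw [harr]
    exact hgrid
  | succ q hq1 ih =>
    intro a e hae hch
    have hh2 : 2 ≤ 2^q := by
      calc (2:ℕ) = 2^1 := by norm_num
      _ ≤ 2^q := Nat.pow_le_pow_right (by norm_num) hq1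
    have hm : (2:ℕ)^(q+1) + 1 = 2 * 2^q + 1 := by rw [pow_succ]; ring
    rw [hm] at hch
    obtain ⟨c, hc0, hcm, hc⟩ := altn_chain (2 * 2^q + 1) β γ a e hch
    set h : ℕ := 2^q with hhdef
    have hc01 : β (c 0) (c 1) := by
      have h3 := hc 0 (by omega); rwa [if_pos (by norm_num : 0 % 2 = 0)] at h3
    have hheven : h % 2 = 0 := by
      obtain ⟨q', rfl⟩ : ∃ q', q = q' + 1 := ⟨q - 1, by omega⟩
      rw [hhdef, pow_succ, Nat.mul_mod]
      norm_num
    have hj1n : (1:ℕ) ≤ n + 1 := by omega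
    have hαd : α a (j 1 a (c 1) e) := by
      have h3 := hjα 1 (le_refl 1) hj1n a (c 1) e a (c 1) a (hα.refl a) (hα.refl _)
        (hα.symm hae)
      rw [hid 1 (le_refl 1) hj1n a (c 1)] at h3
      exact hα.symm h3
    -- the p-path : altn β γ (h+1) a (j 1 a (c 1) e)
    have hpath : altn β γ (h + 1) a (j 1 a (c 1) e) := by
      refine altn_build' (h+1) _ _
        (fun k => if k = 0 then a else if k ≤ h then p a (c (h+1-k)) (c (h+k))
          else j 1 a (c 1) e) _ _ (by simp) ?_ ?_
      · have h1 : ¬ (h + 1 = 0) := by omega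
        have h2 : ¬ (h + 1 ≤ h) := by omega
        simp [h1, h2]
      · intro t ht
        rcases Nat.eq_or_lt_of_le (Nat.zero_le t) with ht0 | ht0
        · -- t = 0
          rw [← ht0]
          simp only [if_pos rfl, if_neg (by omega : ¬ (0:ℕ) + 1 = 0),
            if_pos (by omega : (0:ℕ) + 1 ≤ h), if_true]
          have hch' : β (c h) (c (h+1)) := by
            have h3 := hc h (by omega)
            rwa [if_pos hheven] at h3
          have h3 := hpβ a (c (h+1)) (c (h+1)) a (c h) (c (h+1)) (hβ.refl a)
            (hβ.symm hch') (hβ.refl _)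
          rw [hpzz a (c (h+1))] at h3
          have he : h + 1 - (0+1) = h := by omega
          have he' : h + (0+1) = h + 1 := by omega
          rw [he, he']
          exact h3
        · rcases Nat.lt_or_ge t h with hth | hth
          · -- 1 ≤ t < h
            simp only [if_neg (by omega : ¬ t = 0), if_pos (by omega : t ≤ h),
              if_neg (by omega : ¬ t + 1 = 0), if_pos (by omega : t + 1 ≤ h)]
            have hdown : (if (h - t) % 2 = 0 then β else γ) (c (h-t)) (c (h+1-t)) := by
              have h3 := hc (h-t) (by omega)
              have he : h - t + 1 = h + 1 - t := by omega
              rwa [he] at h3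
            have hup : (if (h + t) % 2 = 0 then β else γ) (c (h+t)) (c (h+t+1)) :=
              hc (h+t) (by omega)
            have he1 : h + 1 - (t+1) = h - t := by omega
            rw [he1]
            rcases Nat.mod_two_eq_zero_or_one t with hp | hp
            · rw [if_pos hp]
              rw [if_pos (by omega)] at hdown
              rw [if_pos (by omega)] at hup
              exact hpβ a (c (h+1-t)) (c (h+t)) a (c (h-t)) (c (h+t+1)) (hβ.refl a)
                (hβ.symm hdown) hup
            · rw [if_neg (by omega)]
              rw [if_neg (by omega)] at hdown
              rw [if_neg (by omega)] at hup
              exact hpγ a (c (h+1-t)) (c (h+t)) a (c (h-t)) (c (h+t+1)) (hγ.refl a)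
                (hγ.symm hdown) hup
          · -- t = h
            have hth' : t = h := by omega
            subst hth'
            simp only [if_neg (by omega : ¬ h = 0), if_pos (le_refl h),
              if_neg (by omega : ¬ h + 1 = 0), if_neg (by omega : ¬ h + 1 ≤ h)]
            rw [if_pos hheven]
            have he1 : h + 1 - h = 1 := by omega
            rw [he1]
            have hc2h : β (c (h+h)) (c (h+h+1)) := by
              have h3 := hc (h+h) (by omega)
              rwa [if_pos (by omega)] at h3
            have h3 : β (p a (c 1) (c (h+h))) (p a a e) := by
              have h4 := hpβ a (c 1) (c (h+h)) a (c 0) (c (h+h+1)) (hβ.refl a)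
                (hβ.symm hc01) hc2h
              have he2 : h + h + 1 = 2 * h + 1 := by omega
              rw [hc0, he2, hcm] at h4
              exact h4
            rw [hpj1 a e] at h3
            have h4 : β (j 1 a a e) (j 1 a (c 1) e) := by
              have h5 := hjβ 1 (le_refl 1) hj1n a a e a (c 1) e (hβ.refl a) ?_ (hβ.refl e)
              · exact h5
              · rw [← hc0]; exact hc01
            exact hβ.trans h3 h4
    -- apply IH
    have hpath' : altn β γ (2^q + 1) a (j 1 a (c 1) e) := hpath
    obtain ⟨d, hd1, hd2⟩ := ih a (j 1 a (c 1) e) hαd hpath'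
    -- grid walk on the full chain
    have hgrid := grid_walk n j α β γ hα hβ hγ hjα hjβ hjγ hid hoddE hevenE hlast
      (2 * h + 1) (by omega) (by omega) a e c hc0 hcm hc hae
    rw [show 2 * h + 1 - 1 = 2 * h by omega] at hgrid
    have hev : ((2^(q+1) - 2) * n) % 2 = 0 := by
      rw [Nat.mul_mod]
      have h3 : (2^(q+1) - 2) % 2 = 0 := by
        rw [pow_succ]
        omega
      simp [h3]
    have hcomb := altn_trans_even ((2^(q+1) - 2) * n) hev hd2 hgrid
    refine ⟨d, hd1, ?_⟩
    have harr : (2^(q+1) - 2) * n + n * (2 * h) = (2^(q+1+1) - 2) * n := by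
      obtain ⟨d', hd'⟩ : ∃ d', h = d' + 1 := ⟨h - 1, by omega⟩
      have e1 : (2:ℕ)^(q+1) = 2 * h := by rw [pow_succ, hhdef]; ring
      have e2 : (2:ℕ)^(q+1+1) = 4 * h := by
        rw [pow_succ, e1]; ring
      rw [e1, e2, hd']
      have e3 : 2 * (d' + 1) - 2 = 2 * d' := by omega
      have e4 : 4 * (d' + 1) - 2 = 4 * d' + 2 := by omega
      rw [e3, e4]
      ring
    rw [harr] at hcomb
    exact hcomb
end

section
/- Suppose an algebra A has Gumm operations p, j_1, ..., j_{n+1}. Then for every q ≥ 2 and all congruences α, β, γ of A, A is (2^q − 1, (2^{q+1} − 2q − 2)n + 2)-modular: α ∩ (β ∘ (α∩γ) ∘ β ∘ ⋯ ∘ β) with 2^q − 1 alternating factors is contained in (α∩β) ∘ (α∩γ) ∘ ⋯ with (2^{q+1} − 2q − 2)n + 2 alternating factors. -/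
/-!
Induction on `q`: if `α ∩ (β ∘ δ ∘ ⋯) ⊆ ρ ∘ δ ∘ ⋯` with `m` factors on the left (`m` odd) and
`K` on the right, where `δ = α ∩ γ` and `ρ = α ∩ β`, then the same holds with `2m + 1` and
`K + 2mn` factors. Given `α a e` and a chain `a β y δ ⋯ δ y' β e` of `2m + 1` factors, split it
at its middle `δ`-step `b δ c`. Then `P = p(a, b, c)` is `δ`-related to `a`, and pushing the two
halves through `p(a, ·, ·)` yields a chain of `m` factors from `P` to `p(a, a, e) = j₁(a, a, e)`,
hence to `j₁(a, y, e)`, to which the induction hypothesis applies. The inner chain `y ⋯ y'` of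
`2m - 1` factors is pushed through `j_i(a, ·, e)` for `i = 1, …, n`, alternately forwards and
backwards, and consecutive copies are linked by the Gumm equations; after `2m` factors per `i`
this reaches `j_{n+1}(a, ·, e) = e`. When `n = 0`, `p` is a Maltsev term and congruences permute.
-/

section Altn

variable {A : Type*} {R S : A → A → Prop}

theorem altn_one_iff {a b : A} : altn R S 1 a b ↔ R a b := by
  simp [altn, rcomp]

theorem altn_two_mul_add (k l : ℕ) {a c : A} :
    altn R S (2 * k + l) a c ↔ ∃ b, altn R S (2 * k) a b ∧ altn R S l b c := by
  induction k generalizing a with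
  | zero => simp [altn]
  | succ k ih =>
    rw [show 2 * (k + 1) + l = 2 * k + l + 1 + 1 by ring, show 2 * (k + 1) = 2 * k + 1 + 1 by ring]
    simp only [altn, rcomp, ih]
    constructor
    · rintro ⟨x, hax, y, hxy, b, hyb, hbc⟩
      exact ⟨b, ⟨x, hax, y, hxy, hyb⟩, hbc⟩
    · rintro ⟨b, ⟨x, hax, y, hxy, hyb⟩, hbc⟩
      exact ⟨x, hax, y, hxy, b, hyb, hbc⟩

theorem altn_two_mul_add_one_add (k l : ℕ) {a c : A} :
    altn R S (2 * k + 1 + l) a c ↔ ∃ b, altn R S (2 * k + 1) a b ∧ altn S R l b c := by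
  rw [show 2 * k + 1 + l = 2 * k + l + 1 by ring]
  simp only [altn, rcomp, altn_two_mul_add]
  constructor
  · rintro ⟨x, hax, b, hxb, hbc⟩
    exact ⟨b, ⟨x, hax, hxb⟩, hbc⟩
  · rintro ⟨b, ⟨x, hax, hxb⟩, hbc⟩
    exact ⟨x, hax, b, hxb, hbc⟩

theorem altn_two_mul_symm (hR : ∀ {x y}, R x y → R y x) (hS : ∀ {x y}, S x y → S y x)
    (k : ℕ) {a b : A} (h : altn R S (2 * k) a b) : altn S R (2 * k) b a := by
  induction k generalizing a with
  | zero => exact (h : a = b).symm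
  | succ k ih =>
    rw [show 2 * (k + 1) = 2 * k + 1 + 1 by ring] at h
    obtain ⟨x, hax, y, hxy, hyb⟩ := h
    rw [show 2 * (k + 1) = 2 * k + 2 by ring]
    exact (altn_two_mul_add k 2).2 ⟨y, ih hyb, x, hS hxy, a, hR hax, rfl⟩

theorem altn_two_mul_add_one_symm (hR : ∀ {x y}, R x y → R y x) (hS : ∀ {x y}, S x y → S y x)
    (k : ℕ) {a b : A} (h : altn R S (2 * k + 1) a b) : altn R S (2 * k + 1) b a := by
  obtain ⟨x, hax, hxb⟩ := h
  exact (altn_two_mul_add k 1).2 ⟨x, altn_two_mul_symm hS hR k hxb, a, hR hax, rfl⟩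

theorem altn_two_mul_add_one_merge (hR : ∀ {x y z}, R x y → R y z → R x z) {k l : ℕ}
    {a b c : A} (h₁ : altn R S (2 * k + 1) a b) (h₂ : altn R S (l + 1) b c) :
    altn R S (2 * k + 1 + l) a c := by
  obtain ⟨x, hax, hxb⟩ := (altn_two_mul_add k 1).1 h₁
  obtain ⟨y, hby, hyc⟩ := h₂
  exact (altn_two_mul_add_one_add k l).2
    ⟨y, (altn_two_mul_add k 1).2 ⟨x, hax, altn_one_iff.2 (hR (altn_one_iff.1 hxb) hby)⟩, hyc⟩

theorem altn_two_mul_mul (w : ℕ → A) (k N : ℕ)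
    (h : ∀ i < N, altn R S (2 * k) (w i) (w (i + 1))) : altn R S (2 * k * N) (w 0) (w N) := by
  induction N with
  | zero => exact (rfl : w 0 = w 0)
  | succ N ih =>
    rw [show 2 * k * (N + 1) = 2 * (k * N) + 2 * k by ring]
    refine (altn_two_mul_add _ _).2 ⟨w N, ?_, h N (by omega)⟩
    rw [← mul_assoc]
    exact ih fun i hi => h i (by omega)

theorem altn_map {B : Type*} {R' S' : B → B → Prop} (f : A → B)
    (hR : ∀ {x y}, R x y → R' (f x) (f y)) (hS : ∀ {x y}, S x y → S' (f x) (f y))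
    {k : ℕ} {a b : A} (h : altn R S k a b) : altn R' S' k (f a) (f b) := by
  induction k generalizing R S R' S' a with
  | zero => exact congrArg f (h : a = b)
  | succ k ih =>
    obtain ⟨x, hax, hxb⟩ := h
    exact ⟨f x, hR hax, ih hS hR hxb⟩

theorem altn_map₂ {B : Type*} {R' S' : B → B → Prop} (f : A → A → B)
    (hR : ∀ {x y u v}, R x y → R u v → R' (f x u) (f y v))
    (hS : ∀ {x y u v}, S x y → S u v → S' (f x u) (f y v))
    {k : ℕ} {a b c d : A} (h₁ : altn R S k a b) (h₂ : altn R S k c d) :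
    altn R' S' k (f a c) (f b d) := by
  induction k generalizing R S R' S' a c with
  | zero =>
    obtain rfl : a = b := h₁
    obtain rfl : c = d := h₂
    rfl
  | succ k ih =>
    obtain ⟨x, hax, hxb⟩ := h₁
    obtain ⟨y, hcy, hyd⟩ := h₂
    exact ⟨f x y, hR hax hcy, ih hS hR hxb hyd⟩

theorem rcomp_of_altn_of_comm (hRr : ∀ x, R x x) (hSr : ∀ x, S x x)
    (hRt : ∀ {x y z}, R x y → R y z → R x z) (hSt : ∀ {x y z}, S x y → S y z → S x z)
    (hcomm : ∀ {x y}, rcomp S R x y → rcomp R S x y) (k : ℕ) {a b : A}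
    (h : altn R S k a b) : rcomp R S a b := by
  suffices ∀ k a b, (altn R S k a b → rcomp R S a b) ∧ (altn S R k a b → rcomp R S a b) from
    (this k a b).1 h
  intro k
  induction k with
  | zero =>
    intro a b
    constructor <;> rintro rfl <;> exact ⟨a, hRr a, hSr a⟩
  | succ k ih =>
    intro a b
    constructor
    · rintro ⟨x, hax, hxb⟩
      obtain ⟨y, hxy, hyb⟩ := (ih x b).2 hxb
      exact ⟨y, hRt hax hxy, hyb⟩
    · rintro ⟨x, hax, hxb⟩
      obtain ⟨y, hxy, hyb⟩ := (ih x b).1 hxb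
      obtain ⟨z, haz, hzy⟩ := hcomm ⟨x, hax, hxy⟩
      exact ⟨z, haz, hSt hzy hyb⟩

theorem Equivalence.rinter (hR : Equivalence R) (hS : Equivalence S) :
    Equivalence (rinter R S) :=
  ⟨fun x => ⟨hR.refl x, hS.refl x⟩, fun h => ⟨hR.symm h.1, hS.symm h.2⟩,
    fun h h' => ⟨hR.trans h.1 h'.1, hS.trans h.2 h'.2⟩⟩

theorem pres3.rinter {f : A → A → A → A} (hR : pres3 f R) (hS : pres3 f S) :
    pres3 f (rinter R S) := fun _ _ _ _ _ _ h₁ h₂ h₃ =>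
  ⟨hR _ _ _ _ _ _ h₁.1 h₂.1 h₃.1, hS _ _ _ _ _ _ h₁.2 h₂.2 h₃.2⟩

end Altn

section Maltsev

variable {A : Type*} {p : A → A → A → A}

theorem rcomp_comm_of_maltsev (hp₁ : ∀ x z, p x z z = x) (hp₂ : ∀ x z, p x x z = z)
    {R S : A → A → Prop} (hpR : pres3 p R) (hpS : pres3 p S) (hRr : ∀ x, R x x)
    (hSr : ∀ x, S x x) (hSs : ∀ {x y}, S x y → S y x) {x y : A} (h : rcomp S R x y) :
    rcomp R S x y := by
  obtain ⟨u, hxu, huy⟩ := h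
  refine ⟨p x u y, ?_, ?_⟩
  · simpa only [hp₁] using hpR x u u x u y (hRr x) (hRr u) huy
  · simpa only [hp₂] using hpS x u y x x y (hSr x) (hSs hxu) (hSr y)

theorem modular_of_maltsev (hp₁ : ∀ x z, p x z z = x) (hp₂ : ∀ x z, p x x z = z)
    {α β γ : A → A → Prop} (hα : Equivalence α) (hβ : Equivalence β) (hγ : Equivalence γ)
    (hpα : pres3 p α) (hpβ : pres3 p β) (hpγ : pres3 p γ) (k : ℕ) :
    rsub (rinter α (altn β (rinter α γ) k)) (altn (rinter α β) (rinter α γ) 2) := by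
  rintro a b ⟨hab, h⟩
  have hδ := hα.rinter hγ
  obtain ⟨u, hau, hub⟩ := rcomp_of_altn_of_comm hβ.refl hδ.refl hβ.trans hδ.trans
    (rcomp_comm_of_maltsev hp₁ hp₂ hpβ (hpα.rinter hpγ) hβ.refl hδ.refl hδ.symm) k h
  exact ⟨u, ⟨hα.trans hab (hα.symm hub.1), hau⟩, b, hub, rfl⟩

end Maltsev

structure IsGummCongr {A : Type*} (n : ℕ) (p : A → A → A → A) (j : ℕ → A → A → A → A)
    (R : A → A → Prop) : Prop where
  equiv : Equivalence R
  pres_p : pres3 p R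
  pres_j : ∀ i, 1 ≤ i → i ≤ n + 1 → pres3 (j i) R

theorem IsGummCongr.rinter {A : Type*} {n : ℕ} {p : A → A → A → A}
    {j : ℕ → A → A → A → A} {R S : A → A → Prop}
    (hR : IsGummCongr n p j R) (hS : IsGummCongr n p j S) :
    IsGummCongr n p j (rinter R S) :=
  ⟨hR.equiv.rinter hS.equiv, hR.pres_p.rinter hS.pres_p,
    fun i hi₁ hi₂ => (hR.pres_j i hi₁ hi₂).rinter (hS.pres_j i hi₁ hi₂)⟩

namespace GummEqs

variable {A : Type*} {n : ℕ} {p : A → A → A → A} {j : ℕ → A → A → A → A}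
  {R α β γ : A → A → Prop}

theorem rel_p_left (hg : GummEqs n p j) (hR : IsGummCongr n p j R) (a : A) {b c : A}
    (hbc : R b c) : R a (p a b c) := by
  obtain ⟨-, hp₁, -, -, -, -⟩ := hg
  have hr := hR.equiv.refl
  simpa only [hp₁] using hR.pres_p a c c a b c (hr a) (hR.equiv.symm hbc) (hr c)

theorem rel_j_left (hg : GummEqs n p j) (hR : IsGummCongr n p j R) {a e : A} (hae : R a e)
    {i : ℕ} (hi₁ : 1 ≤ i) (hi₂ : i ≤ n + 1) (x : A) : R (j i a x e) a := by
  obtain ⟨hidem, -, -, -, -, -⟩ := hg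
  have hr := hR.equiv.refl
  simpa only [hidem i hi₁ hi₂] using
    hR.pres_j i hi₁ hi₂ a x e a x a (hr a) (hr x) (hR.equiv.symm hae)

theorem rel_j_succ (hg : GummEqs n p j) (hR : IsGummCongr n p j R) {a z e : A} {i : ℕ}
    (hi₁ : 1 ≤ i) (hi₂ : i ≤ n) (hodd : i % 2 = 1 → R z e) (heven : i % 2 = 0 → R a z) :
    R (j i a z e) (j (i + 1) a z e) := by
  obtain ⟨-, -, -, hjodd, hjeven, -⟩ := hg
  have hr := hR.equiv.refl
  have hj := hR.pres_j i hi₁ (by omega)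
  have hj' := hR.pres_j (i + 1) (by omega) (by omega)
  rcases Nat.mod_two_eq_zero_or_one i with hi | hi
  · have h₁ := hj a z e a a e (hr a) (hR.equiv.symm (heven hi)) (hr e)
    rw [hjeven i hi₁ hi₂ hi] at h₁
    exact hR.equiv.trans h₁ (hj' a a e a z e (hr a) (heven hi) (hr e))
  · have h₁ := hj a z e a e e (hr a) (hodd hi) (hr e)
    rw [hjodd i hi₁ hi₂ hi] at h₁
    exact hR.equiv.trans h₁ (hj' a e e a z e (hr a) (hR.equiv.symm (hodd hi)) (hr e))

theorem altn_map_j (hg : GummEqs n p j) (hα : IsGummCongr n p j α) (hβ : IsGummCongr n p j β)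
    (hγ : IsGummCongr n p j γ) {a e : A} (hae : α a e) {i : ℕ} (hi₁ : 1 ≤ i) (hi₂ : i ≤ n + 1)
    {k : ℕ} {u v : A} (h : altn (rinter α γ) β k u v) :
    altn (rinter α γ) (rinter α β) k (j i a u e) (j i a v e) := by
  have hδ := hα.rinter hγ
  refine altn_map (fun x => j i a x e) (fun hxy => ?_) (fun hxy => ?_) h
  · exact hδ.pres_j i hi₁ hi₂ _ _ _ _ _ _ (hδ.equiv.refl a) hxy (hδ.equiv.refl e)
  · exact ⟨hα.equiv.trans (hg.rel_j_left hα hae hi₁ hi₂ _)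
        (hα.equiv.symm (hg.rel_j_left hα hae hi₁ hi₂ _)),
      hβ.pres_j i hi₁ hi₂ _ _ _ _ _ _ (hβ.equiv.refl a) hxy (hβ.equiv.refl e)⟩

theorem altn_j_one_ladder (hg : GummEqs n p j) (hα : IsGummCongr n p j α)
    (hβ : IsGummCongr n p j β) (hγ : IsGummCongr n p j γ) {a e y y' : A} (hae : α a e)
    (hay : β a y) (hy'e : β y' e) {l : ℕ} (hyy' : altn (rinter α γ) β (2 * l + 1) y y') :
    altn (rinter α γ) (rinter α β) (2 * (l + 1) * n) (j 1 a y e) e := by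
  let z : ℕ → A := fun i => if i % 2 = 1 then y else y'
  have hz : ∀ i, altn (rinter α γ) β (2 * l + 1) (z i) (z (i + 1)) := by
    intro i
    rcases Nat.mod_two_eq_zero_or_one i with hi | hi
    · simp only [z, if_neg (show ¬i % 2 = 1 by omega), if_pos (show (i + 1) % 2 = 1 by omega)]
      exact altn_two_mul_add_one_symm (hα.rinter hγ).equiv.symm hβ.equiv.symm l hyy'
    · simp only [z, if_pos hi, if_neg (show ¬(i + 1) % 2 = 1 by omega)]
      exact hyy'
  have hlink : ∀ i < n, altn (rinter α γ) (rinter α β) (2 * (l + 1))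
      (j (i + 1) a (z (i + 1)) e) (j (i + 1 + 1) a (z (i + 1 + 1)) e) := by
    intro i hi
    have hβlink : β (j (i + 1) a (z (i + 2)) e) (j (i + 2) a (z (i + 2)) e) := by
      refine hg.rel_j_succ hβ (by omega) (by omega) (fun hodd => ?_) (fun heven => ?_)
      · simpa only [z, if_neg (show ¬(i + 2) % 2 = 1 by omega)] using hy'e
      · simpa only [z, if_pos (show (i + 2) % 2 = 1 by omega)] using hay
    rw [show 2 * (l + 1) = 2 * l + 1 + 1 by ring]
    refine (altn_two_mul_add_one_add l 1).2
      ⟨_, hg.altn_map_j hα hβ hγ hae (by omega) (by omega) (hz (i + 1)), altn_one_iff.2 ⟨?_, hβlink⟩⟩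
    exact hα.equiv.trans (hg.rel_j_left hα hae (by omega) (by omega) _)
      (hα.equiv.symm (hg.rel_j_left hα hae (by omega) (by omega) _))
  have hjn : j (n + 1) a (z (n + 1)) e = e := hg.2.2.2.2.2 _ _ _
  simpa only [z, hjn, zero_add, if_pos (show 1 % 2 = 1 by rfl)] using
    altn_two_mul_mul (fun i => j (i + 1) a (z (i + 1)) e) (l + 1) n hlink

theorem altn_p_j_one (hg : GummEqs n p j) (hβ : IsGummCongr n p j β)
    (hR : IsGummCongr n p j R) {r : ℕ} {a b c e y : A} (hab : altn β R (2 * r + 1) a b)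
    (hce : altn β R (2 * r + 1) c e) (hay : β a y) :
    altn β R (2 * r + 1) (p a b c) (j 1 a y e) := by
  obtain ⟨-, -, hp₂, -, -, -⟩ := hg
  have hzip : altn β R (2 * r + 1) (p a b c) (p a a e) :=
    altn_map₂ (p a)
      (fun hxy huv => hβ.pres_p _ _ _ _ _ _ (hβ.equiv.refl a) hxy huv)
      (fun hxy huv => hR.pres_p _ _ _ _ _ _ (hR.equiv.refl a) hxy huv)
      (altn_two_mul_add_one_symm hβ.equiv.symm hR.equiv.symm r hab) hce
  rw [hp₂] at hzip
  exact altn_two_mul_add_one_merge (R := β) hβ.equiv.trans hzip (altn_one_iff.2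
    (hβ.pres_j 1 le_rfl (by omega) a a e a y e (hβ.equiv.refl a) hay (hβ.equiv.refl e)))

theorem altn_of_modular (hg : GummEqs n p j) (hα : IsGummCongr n p j α)
    (hβ : IsGummCongr n p j β) (hγ : IsGummCongr n p j γ) (hn : n ≠ 0) {m K : ℕ} (hm : Odd m)
    (hK : Even K)
    (ih : rsub (rinter α (altn β (rinter α γ) m)) (altn (rinter α β) (rinter α γ) K))
    {a e : A} (hae : α a e) (h : altn β (rinter α γ) (2 * m + 1) a e) :
    altn (rinter α γ) (rinter α β) (K + 2 * m * n) a e := by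
  have hδ := hα.rinter hγ
  obtain ⟨r, rfl⟩ := hm
  obtain ⟨y, hay, hye⟩ := id h
  rw [show 2 * (2 * r + 1) = 2 * (2 * r) + 1 + 1 by ring] at hye
  obtain ⟨y', hyy', hy'e⟩ := (altn_two_mul_add_one_add (2 * r) 1).1 hye
  rw [show 2 * (2 * r + 1) + 1 = 2 * r + 1 + (2 * 0 + 1 + (2 * r + 1)) by ring] at h
  obtain ⟨b, hab, hbe⟩ := (altn_two_mul_add_one_add r _).1 h
  obtain ⟨c, hbc, hce⟩ := (altn_two_mul_add_one_add 0 _).1 hbe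
  have haP : rinter α γ a (p a b c) := hg.rel_p_left hδ a (altn_one_iff.1 hbc)
  have hPj : altn (rinter α β) (rinter α γ) K (p a b c) (j 1 a y e) :=
    ih _ _ ⟨hα.equiv.trans (hα.equiv.symm haP.1)
        (hα.equiv.symm (hg.rel_j_left hα hae le_rfl (by omega) y)),
      hg.altn_p_j_one hβ hδ hab hce hay⟩
  have hladder := hg.altn_j_one_ladder hα hβ hγ hae hay (altn_one_iff.1 hy'e) hyy'
  obtain ⟨s, rfl⟩ := hK
  obtain ⟨L, hL⟩ : ∃ L, 2 * (2 * r + 1) * n = L + 1 := ⟨_, (Nat.succ_pred_eq_of_ne_zero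
    (by positivity)).symm⟩
  rw [hL] at hladder
  rw [show s + s + 2 * (2 * r + 1) * n = 2 * s + 1 + L by omega]
  exact altn_two_mul_add_one_merge (R := rinter α γ) hδ.equiv.trans
    (show altn (rinter α γ) (rinter α β) (2 * s + 1) a (j 1 a y e) from
      ⟨_, haP, by rwa [two_mul]⟩) hladder

theorem modular_two_mul_add_one (hg : GummEqs n p j) (hα : IsGummCongr n p j α)
    (hβ : IsGummCongr n p j β) (hγ : IsGummCongr n p j γ) (hn : n ≠ 0) {m K : ℕ} (hm : Odd m)
    (hK : Even K)
    (ih : rsub (rinter α (altn β (rinter α γ) m)) (altn (rinter α β) (rinter α γ) K)) :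
    rsub (rinter α (altn β (rinter α γ) (2 * m + 1)))
      (altn (rinter α β) (rinter α γ) (K + 2 * m * n)) := by
  rintro a b ⟨hab, h⟩
  have hδ := hα.equiv.rinter hγ.equiv
  have hba := hg.altn_of_modular hα hβ hγ hn hm hK ih (hα.equiv.symm hab)
    (altn_two_mul_add_one_symm hβ.equiv.symm hδ.symm m h)
  obtain ⟨s, rfl⟩ := hK
  rw [show s + s + 2 * m * n = 2 * (s + m * n) by ring] at hba ⊢
  exact altn_two_mul_symm hδ.symm (hα.equiv.rinter hβ.equiv).symm _ hba

theorem modular_pow (hg : GummEqs n p j) (hα : IsGummCongr n p j α)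
    (hβ : IsGummCongr n p j β) (hγ : IsGummCongr n p j γ) (hn : n ≠ 0) (q : ℕ) :
    rsub (rinter α (altn β (rinter α γ) (2 ^ q - 1)))
      (altn (rinter α β) (rinter α γ) ((2 ^ (q + 1) - 2 * q - 2) * n + 2)) := by
  induction q with
  | zero =>
    rintro a b ⟨-, rfl : a = b⟩
    rw [show (2 ^ (0 + 1) - 2 * 0 - 2) * n + 2 = 2 by norm_num]
    exact ⟨a, (hα.equiv.rinter hβ.equiv).refl a, a, (hα.equiv.rinter hγ.equiv).refl a, rfl⟩
  | succ q ih =>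
    rcases q with _ | q
    · rintro a b ⟨hab, h⟩
      rw [show (2 ^ (0 + 1 + 1) - 2 * (0 + 1) - 2) * n + 2 = 2 by norm_num]
      exact ⟨b, ⟨hab, altn_one_iff.1 h⟩, b, (hα.equiv.rinter hγ.equiv).refl b, rfl⟩
    · have h₁ : 2 ^ (q + 2) = 2 * 2 ^ (q + 1) := pow_succ' 2 (q + 1)
      have h₂ : 2 ^ (q + 3) = 2 * 2 ^ (q + 2) := pow_succ' 2 (q + 2)
      have h₃ : q + 1 < 2 ^ (q + 1) := Nat.lt_two_pow_self
      have hm : Odd (2 ^ (q + 1) - 1) := ⟨2 ^ q - 1, by rw [pow_succ] at h₃ ⊢; omega⟩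
      have hK : Even ((2 ^ (q + 2) - 2 * (q + 1) - 2) * n + 2) :=
        ⟨(2 ^ (q + 1) - q - 2) * n + 1, by rw [show 2 ^ (q + 2) - 2 * (q + 1) - 2 =
          2 * (2 ^ (q + 1) - q - 2) by omega]; ring⟩
      have step := hg.modular_two_mul_add_one hα hβ hγ hn hm hK ih
      rwa [show 2 * (2 ^ (q + 1) - 1) + 1 = 2 ^ (q + 2) - 1 by omega,
        show (2 ^ (q + 2) - 2 * (q + 1) - 2) * n + 2 + 2 * (2 ^ (q + 1) - 1) * n =
          (2 ^ (q + 3) - 2 * (q + 2) - 2) * n + 2 by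
          rw [show 2 ^ (q + 3) - 2 * (q + 2) - 2 =
            2 ^ (q + 2) - 2 * (q + 1) - 2 + 2 * (2 ^ (q + 1) - 1) by omega]; ring] at step

end GummEqs

theorem stmt11_general {A : Type*} (n : ℕ) (p : A → A → A → A) (j : ℕ → A → A → A → A)
    (hg : GummEqs n p j)
    (α β γ : A → A → Prop)
    (hα : Equivalence α) (hβ : Equivalence β) (hγ : Equivalence γ)
    (hpα : pres3 p α) (hjα : ∀ i, 1 ≤ i → i ≤ n + 1 → pres3 (j i) α)
    (hpβ : pres3 p β) (hjβ : ∀ i, 1 ≤ i → i ≤ n + 1 → pres3 (j i) β)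
    (hpγ : pres3 p γ) (hjγ : ∀ i, 1 ≤ i → i ≤ n + 1 → pres3 (j i) γ)
    (q : ℕ) :
    rsub (rinter α (altn β (rinter α γ) (2 ^ q - 1)))
      (altn (rinter α β) (rinter α γ) ((2 ^ (q + 1) - 2 * q - 2) * n + 2)) := by
  rcases eq_or_ne n 0 with rfl | hn
  · obtain ⟨-, hp₁, hp₂, -, -, hj₁⟩ := hg
    rw [mul_zero, zero_add]
    exact modular_of_maltsev hp₁ (fun x z => (hp₂ x z).trans (hj₁ x x z)) hα hβ hγ hpα hpβ hpγ _
  · exact hg.modular_pow ⟨hα, hpα, hjα⟩ ⟨hβ, hpβ, hjβ⟩ ⟨hγ, hpγ, hjγ⟩ hn q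

/-- an algebra with Gumm operations is
`(2^q − 1, (2^{q+1} − 2q − 2)n + 2)`-modular for every `q ≥ 2`. -/
theorem stmt11 {A : Type*} (n : ℕ) (p : A → A → A → A) (j : ℕ → A → A → A → A)
    (hg : GummEqs n p j)
    (α β γ : A → A → Prop)
    (hα : Equivalence α) (hβ : Equivalence β) (hγ : Equivalence γ)
    (hpα : pres3 p α) (hjα : ∀ i, 1 ≤ i → i ≤ n + 1 → pres3 (j i) α)
    (hpβ : pres3 p β) (hjβ : ∀ i, 1 ≤ i → i ≤ n + 1 → pres3 (j i) β)
    (hpγ : pres3 p γ) (hjγ : ∀ i, 1 ≤ i → i ≤ n + 1 → pres3 (j i) γ)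
    (q : ℕ) (hq : 2 ≤ q) :
    rsub (rinter α (altn β (rinter α γ) (2 ^ q - 1)))
      (altn (rinter α β) (rinter α γ) ((2 ^ (q + 1) - 2 * q - 2) * n + 2)) :=
  stmt11_general n p j hg α β γ hα hβ hγ hpα hjα hpβ hjβ hpγ hjγ q
end

section
/- Suppose an algebra A has Gumm operations p, j_1, ..., j_{n+1}. Then A is (2n+2)-modular: for all congruences α, β, γ of A, α ∩ (β ∘ (α∩γ) ∘ β) ⊆ (α∩β) ∘_{2n+2} (α∩γ). -/
lemma altn_two_step {A : Type*} (R S : A → A → Prop) (m : ℕ) (a c d b : A)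
    (h1 : R a c) (h2 : S c d) (h3 : altn R S m d b) : altn R S (m + 2) a b :=
  ⟨c, h1, d, h2, h3⟩

/-- an algebra with Gumm operations `p, j 1, …, j (n+1)` is `(2n+2)`-modular:
`α ∩ (β ∘ (α∩γ) ∘ β) ⊆ (α∩β) ∘_{2n+2} (α∩γ)` for congruences `α, β, γ`. -/
theorem stmt12 {A : Type*} (n : ℕ) (p : A → A → A → A) (j : ℕ → A → A → A → A)
    (hg : GummEqs n p j)
    (α β γ : A → A → Prop)
    (hα : Equivalence α) (hβ : Equivalence β) (hγ : Equivalence γ)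
    (hpα : pres3 p α) (hjα : ∀ i, 1 ≤ i → i ≤ n + 1 → pres3 (j i) α)
    (hpβ : pres3 p β) (hjβ : ∀ i, 1 ≤ i → i ≤ n + 1 → pres3 (j i) β)
    (hpγ : pres3 p γ) (hjγ : ∀ i, 1 ≤ i → i ≤ n + 1 → pres3 (j i) γ) :
    rsub (rinter α (rcomp β (rcomp (rinter α γ) β)))
      (altn (rinter α β) (rinter α γ) (2 * n + 2)) := by
  obtain ⟨hjid, hpzz, hpxx, hodd, heven, hlast⟩ := hg
  rintro a b ⟨hab, x, hax, y, ⟨hxyA, hxyG⟩, hyb⟩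
  set R := rinter α β with hRdef
  set S := rinter α γ with hSdef
  -- basic facts about m := p b y x
  have hm_ab : α (p b y x) b := by
    have h := hpα b y x b y y (hα.refl b) (hα.refl y) hxyA
    rwa [hpzz] at h
  have hm_gb : γ (p b y x) b := by
    have h := hpγ b y x b y y (hγ.refl b) (hγ.refl y) hxyG
    rwa [hpzz] at h
  have hm_bA1 : β (p b y x) (j 1 b y a) := by
    have h1 : β (p b y x) (p b b a) :=
      hpβ b y x b b a (hβ.refl b) hyb (hβ.symm hax)
    rw [hpxx] at h1
    exact hβ.trans h1
      (hjβ 1 le_rfl (by omega) b b a b y a (hβ.refl b) (hβ.symm hyb) (hβ.refl a))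
  -- all chain elements are α-related to b
  have hjab : ∀ i, 1 ≤ i → i ≤ n + 1 → ∀ u, α (j i b u a) b := by
    intro i h1 h2 u
    have h := hjα i h1 h2 b u a b u b (hα.refl b) (hα.refl u) hab
    rwa [hjid i h1 h2 b u] at h
  -- γ-steps
  have hgstep : ∀ i, 1 ≤ i → i ≤ n + 1 → γ (j i b x a) (j i b y a) := by
    intro i h1 h2
    exact hjγ i h1 h2 b x a b y a (hγ.refl b) hxyG (hγ.refl a)
  -- β-junctions
  have hoddstep : ∀ i, 1 ≤ i → i ≤ n → i % 2 = 1 →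
      β (j (i + 1) b x a) (j i b x a) := by
    intro i h1 h2 hp2
    have ha1 : β (j i b x a) (j i b a a) :=
      hjβ i h1 (by omega) b x a b a a (hβ.refl b) (hβ.symm hax) (hβ.refl a)
    rw [hodd i h1 h2 hp2] at ha1
    have ha2 : β (j (i + 1) b a a) (j (i + 1) b x a) :=
      hjβ (i + 1) (by omega) (by omega) b a a b x a (hβ.refl b) hax (hβ.refl a)
    exact hβ.symm (hβ.trans ha1 ha2)
  have hevenstep : ∀ i, 1 ≤ i → i ≤ n → i % 2 = 0 →
      β (j (i + 1) b y a) (j i b y a) := by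
    intro i h1 h2 hp2
    have ha1 : β (j i b y a) (j i b b a) :=
      hjβ i h1 (by omega) b y a b b a (hβ.refl b) hyb (hβ.refl a)
    rw [heven i h1 h2 hp2] at ha1
    have ha2 : β (j (i + 1) b b a) (j (i + 1) b y a) :=
      hjβ (i + 1) (by omega) (by omega) b b a b y a (hβ.refl b) (hβ.symm hyb) (hβ.refl a)
    exact hβ.symm (hβ.trans ha1 ha2)
  have key : ∀ i, 1 ≤ i → i ≤ n + 1 →
      altn R S (2 * i) (j i b (if i % 2 = 1 then y else x) a) b := by
    intro i h1
    induction i, h1 using Nat.le_induction with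
    | base =>
      intro _
      rw [if_pos (by norm_num : (1 : ℕ) % 2 = 1)]
      rw [show (2 * 1 : ℕ) = 0 + 2 from rfl]
      refine altn_two_step R S 0 _ (p b y x) b b ⟨?_, ?_⟩ ⟨hm_ab, hm_gb⟩ rfl
      · exact hα.trans (hjab 1 le_rfl (by omega) y) (hα.symm hm_ab)
      · exact hβ.symm hm_bA1
    | succ i hi IH =>
      intro h2
      have hIH := IH (by omega)
      have hin : i ≤ n := by omega
      rw [show (2 * (i + 1) : ℕ) = 2 * i + 2 from by ring]
      rcases Nat.mod_two_eq_zero_or_one i with he | ho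
      · -- i even
        rw [if_pos (by omega : (i + 1) % 2 = 1)]
        rw [if_neg (by omega : ¬ i % 2 = 1)] at hIH
        refine altn_two_step R S (2 * i) _ (j i b y a) (j i b x a) b ⟨?_, ?_⟩ ⟨?_, ?_⟩ hIH
        · exact hα.trans (hjab (i + 1) (by omega) (by omega) y) (hα.symm (hjab i hi (by omega) y))
        · exact hevenstep i hi hin he
        · exact hα.trans (hjab i hi (by omega) y) (hα.symm (hjab i hi (by omega) x))
        · exact hγ.symm (hgstep i hi (by omega))
      · -- i odd
        rw [if_neg (by omega : ¬ (i + 1) % 2 = 1)]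
        rw [if_pos ho] at hIH
        refine altn_two_step R S (2 * i) _ (j i b x a) (j i b y a) b ⟨?_, ?_⟩ ⟨?_, ?_⟩ hIH
        · exact hα.trans (hjab (i + 1) (by omega) (by omega) x) (hα.symm (hjab i hi (by omega) x))
        · exact hoddstep i hi hin ho
        · exact hα.trans (hjab i hi (by omega) x) (hα.symm (hjab i hi (by omega) y))
        · exact hgstep i hi (by omega)
  have h := key (n + 1) (by omega) le_rfl
  rw [hlast] at h
  rwa [show (2 * n + 2 : ℕ) = 2 * (n + 1) from by ring]
end
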